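/- arXiv:2411.16663 — 3 statements merged into one kernel-verified Lean document; each statement's English description precedes it below -/
import Mathlib

section
/- Let u : ℝ³ → ℝ (with coordinates (t,x,y)) be C^∞ on ℝ³ and satisfy ∂²u/∂t² − ∂²u/∂x² − ∂²u/∂y² = 0 at every point (t,x,y) with x ≥ 0, together with u(t,0,y) = 0 for all t,y ∈ ℝ. Define the odd extension v : ℝ³ → ℝ by v(t,x,y) = u(t,x,y) if x ≥ 0 and v(t,x,y) = −u(t,−x,y) if x < 0. Then v is a distributional solution of the wave equation on all of ℝ³: for every C^∞ compactly supported function φ : ℝ³ → ℝ, ∫_{ℝ³} v(t,x,y) · (∂²φ/∂t² − ∂²φ/∂x² − ∂²φ/∂y²)(t,x,y) dt dx dy = 0. -/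
open MeasureTheory
open Set
open scoped ContDiff

/-- Partial derivative in the first variable `t`. -/
noncomputable def d1 (u : ℝ × ℝ × ℝ → ℝ) : ℝ × ℝ × ℝ → ℝ :=
  fun p => deriv (fun s => u (s, p.2.1, p.2.2)) p.1

/-- Partial derivative in the second variable `x`. -/
noncomputable def d2 (u : ℝ × ℝ × ℝ → ℝ) : ℝ × ℝ × ℝ → ℝ :=
  fun p => deriv (fun s => u (p.1, s, p.2.2)) p.2.1

/-- Partial derivative in the third variable `y`. -/
noncomputable def d3 (u : ℝ × ℝ × ℝ → ℝ) : ℝ × ℝ × ℝ → ℝ :=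
  fun p => deriv (fun s => u (p.1, p.2.1, s)) p.2.2


namespace OddExtAux

lemma d1_eq (f : ℝ × ℝ × ℝ → ℝ) (hf : Differentiable ℝ f) :
    d1 f = fun p => fderiv ℝ f p (1, 0, 0) := by
  funext p
  have hc : HasDerivAt (fun s : ℝ => (s, p.2.1, p.2.2)) ((1 : ℝ), (0 : ℝ), (0 : ℝ)) p.1 :=
    HasDerivAt.prodMk (hasDerivAt_id _) (hasDerivAt_const _ _)
  exact ((hf (p.1, p.2.1, p.2.2)).hasFDerivAt.comp_hasDerivAt p.1 hc).deriv

lemma d2_eq (f : ℝ × ℝ × ℝ → ℝ) (hf : Differentiable ℝ f) :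
    d2 f = fun p => fderiv ℝ f p (0, 1, 0) := by
  funext p
  have hc : HasDerivAt (fun s : ℝ => (p.1, s, p.2.2)) ((0 : ℝ), (1 : ℝ), (0 : ℝ)) p.2.1 :=
    HasDerivAt.prodMk (hasDerivAt_const _ _) (HasDerivAt.prodMk (hasDerivAt_id _) (hasDerivAt_const _ _))
  exact ((hf (p.1, p.2.1, p.2.2)).hasFDerivAt.comp_hasDerivAt p.2.1 hc).deriv

lemma d3_eq (f : ℝ × ℝ × ℝ → ℝ) (hf : Differentiable ℝ f) :
    d3 f = fun p => fderiv ℝ f p (0, 0, 1) := by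
  funext p
  have hc : HasDerivAt (fun s : ℝ => (p.1, p.2.1, s)) ((0 : ℝ), (0 : ℝ), (1 : ℝ)) p.2.2 :=
    HasDerivAt.prodMk (hasDerivAt_const _ _) (HasDerivAt.prodMk (hasDerivAt_const _ _) (hasDerivAt_id _))
  exact ((hf (p.1, p.2.1, p.2.2)).hasFDerivAt.comp_hasDerivAt p.2.2 hc).deriv

lemma contDiff_d1 {f : ℝ × ℝ × ℝ → ℝ} (hf : ContDiff ℝ (⊤ : ℕ∞) f) : ContDiff ℝ (⊤ : ℕ∞) (d1 f) := by
  rw [d1_eq f (hf.differentiable (by simp))]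
  exact (hf.fderiv_right (by simp)).clm_apply contDiff_const

lemma contDiff_d2 {f : ℝ × ℝ × ℝ → ℝ} (hf : ContDiff ℝ (⊤ : ℕ∞) f) : ContDiff ℝ (⊤ : ℕ∞) (d2 f) := by
  rw [d2_eq f (hf.differentiable (by simp))]
  exact (hf.fderiv_right (by simp)).clm_apply contDiff_const

lemma contDiff_d3 {f : ℝ × ℝ × ℝ → ℝ} (hf : ContDiff ℝ (⊤ : ℕ∞) f) : ContDiff ℝ (⊤ : ℕ∞) (d3 f) := by
  rw [d3_eq f (hf.differentiable (by simp))]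
  exact (hf.fderiv_right (by simp)).clm_apply contDiff_const

lemma hcs_d1 {f : ℝ × ℝ × ℝ → ℝ} (hf : ContDiff ℝ (⊤ : ℕ∞) f) (hc : HasCompactSupport f) :
    HasCompactSupport (d1 f) := by
  rw [d1_eq f (hf.differentiable (by simp))]
  exact (hc.fderiv (𝕜 := ℝ)).comp_left (g := fun L : ℝ × ℝ × ℝ →L[ℝ] ℝ => L (1, 0, 0)) rfl

lemma hcs_d2 {f : ℝ × ℝ × ℝ → ℝ} (hf : ContDiff ℝ (⊤ : ℕ∞) f) (hc : HasCompactSupport f) :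
    HasCompactSupport (d2 f) := by
  rw [d2_eq f (hf.differentiable (by simp))]
  exact (hc.fderiv (𝕜 := ℝ)).comp_left (g := fun L : ℝ × ℝ × ℝ →L[ℝ] ℝ => L (0, 1, 0)) rfl

lemma hcs_d3 {f : ℝ × ℝ × ℝ → ℝ} (hf : ContDiff ℝ (⊤ : ℕ∞) f) (hc : HasCompactSupport f) :
    HasCompactSupport (d3 f) := by
  rw [d3_eq f (hf.differentiable (by simp))]
  exact (hc.fderiv (𝕜 := ℝ)).comp_left (g := fun L : ℝ × ℝ × ℝ →L[ℝ] ℝ => L (0, 0, 1)) rfl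


-- slice compact support lemmas
lemma slice_cs_t {F : ℝ × ℝ × ℝ → ℝ} (hc : HasCompactSupport F) (x y : ℝ) :
    HasCompactSupport (fun t => F (t, x, y)) := by
  obtain ⟨R, hR⟩ := hc.isBounded.subset_closedBall 0
  apply HasCompactSupport.intro (isCompact_Icc (a := -R) (b := R))
  intro t ht
  by_contra h
  have hmem : ((t, x, y) : ℝ × ℝ × ℝ) ∈ tsupport F :=
    subset_tsupport _ (by simpa [Function.mem_support] using h)
  have hn : ‖((t, x, y) : ℝ × ℝ × ℝ)‖ ≤ R := by
    simpa [Metric.mem_closedBall, dist_zero_right] using hR hmem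
  have : |t| ≤ R := le_trans (by simp [Prod.norm_def, le_max_iff, abs_le] ) hn
  exact ht (abs_le.mp this |> fun h' => ⟨h'.1, h'.2⟩)


lemma slice_cs_x {F : ℝ × ℝ × ℝ → ℝ} (hc : HasCompactSupport F) (t y : ℝ) :
    HasCompactSupport (fun x => F (t, x, y)) := by
  obtain ⟨R, hR⟩ := hc.isBounded.subset_closedBall 0
  apply HasCompactSupport.intro (isCompact_Icc (a := -R) (b := R))
  intro x hx
  by_contra h
  have hmem : ((t, x, y) : ℝ × ℝ × ℝ) ∈ tsupport F :=
    subset_tsupport _ (by simpa [Function.mem_support] using h)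
  have hn : ‖((t, x, y) : ℝ × ℝ × ℝ)‖ ≤ R := by
    simpa [Metric.mem_closedBall, dist_zero_right] using hR hmem
  have : |x| ≤ R :=
    le_trans (by simp [Prod.norm_def, le_max_iff, Real.norm_eq_abs]) hn
  exact hx (abs_le.mp this |> fun h' => ⟨h'.1, h'.2⟩)

lemma slice_cs_y {F : ℝ × ℝ × ℝ → ℝ} (hc : HasCompactSupport F) (t x : ℝ) :
    HasCompactSupport (fun y => F (t, x, y)) := by
  obtain ⟨R, hR⟩ := hc.isBounded.subset_closedBall 0
  apply HasCompactSupport.intro (isCompact_Icc (a := -R) (b := R))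
  intro y hy
  by_contra h
  have hmem : ((t, x, y) : ℝ × ℝ × ℝ) ∈ tsupport F :=
    subset_tsupport _ (by simpa [Function.mem_support] using h)
  have hn : ‖((t, x, y) : ℝ × ℝ × ℝ)‖ ≤ R := by
    simpa [Metric.mem_closedBall, dist_zero_right] using hR hmem
  have : |y| ≤ R :=
    le_trans (by simp [Prod.norm_def, le_max_iff, Real.norm_eq_abs]) hn
  exact hy (abs_le.mp this |> fun h' => ⟨h'.1, h'.2⟩)

lemma slice_cs_q {F : ℝ × ℝ × ℝ → ℝ} (hc : HasCompactSupport F) (t : ℝ) :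
    HasCompactSupport (fun q : ℝ × ℝ => F (t, q)) := by
  obtain ⟨R, hR⟩ := hc.isBounded.subset_closedBall 0
  apply HasCompactSupport.intro (isCompact_closedBall (0 : ℝ × ℝ) R)
  intro q hq
  by_contra h
  have hmem : ((t, q) : ℝ × ℝ × ℝ) ∈ tsupport F :=
    subset_tsupport _ (by simpa [Function.mem_support] using h)
  have hn : ‖((t, q) : ℝ × ℝ × ℝ)‖ ≤ R := by
    simpa [Metric.mem_closedBall, dist_zero_right] using hR hmem
  exact hq (by
    simp only [Metric.mem_closedBall, dist_zero_right]
    exact le_trans (by simp [Prod.norm_def, le_max_iff]) hn)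


lemma contDiff_deriv {f : ℝ → ℝ} (hf : ContDiff ℝ ∞ f) : ContDiff ℝ ∞ (deriv f) :=
  (contDiff_infty_iff_deriv.mp hf).2

lemma key_line (a b : ℝ → ℝ) (ha : ContDiff ℝ ∞ a) (hb : ContDiff ℝ ∞ b)
    (hbc : HasCompactSupport b) :
    ∫ t, a t * deriv b t = - ∫ t, deriv a t * b t := by
  have hab : ContDiff ℝ 1 (fun t => a t * b t) := (ha.mul hb).of_le (by norm_num : (1:WithTop ℕ∞) ≤ ∞)
  have habc : HasCompactSupport (fun t => a t * b t) := hbc.mul_left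
  have hderiv : deriv (fun t => a t * b t) = fun t => deriv a t * b t + a t * deriv b t := by
    funext t
    exact deriv_fun_mul (ha.differentiable (by simp) t) (hb.differentiable (by simp) t)
  have h1 : Integrable (fun t => deriv a t * b t) :=
    (((contDiff_deriv ha).continuous).mul hb.continuous).integrable_of_hasCompactSupport
      hbc.mul_left
  have h2 : Integrable (fun t => a t * deriv b t) :=
    (ha.continuous.mul (contDiff_deriv hb).continuous).integrable_of_hasCompactSupport
      hbc.deriv.mul_left
  have hzero : ∫ t, deriv (fun t => a t * b t) t = 0 := by
    rw [← intervalIntegral.integral_Iic_add_Ioi (b := 0)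
      (((hab.continuous_deriv le_rfl).integrable_of_hasCompactSupport habc.deriv).integrableOn)
      (((hab.continuous_deriv le_rfl).integrable_of_hasCompactSupport habc.deriv).integrableOn),
      habc.integral_Iic_deriv_eq hab 0, habc.integral_Ioi_deriv_eq hab 0]
    ring
  rw [hderiv, integral_add h1 h2] at hzero
  linarith

lemma parts_line (h g : ℝ → ℝ) (hh : ContDiff ℝ ∞ h) (hg : ContDiff ℝ ∞ g)
    (hgc : HasCompactSupport g) :
    ∫ t, h t * deriv (deriv g) t = ∫ t, deriv (deriv h) t * g t := by
  rw [key_line h (deriv g) hh (contDiff_deriv hg) hgc.deriv]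
  have := key_line (deriv h) g (contDiff_deriv hh) hg hgc
  linarith

lemma key_Ioi (a b : ℝ → ℝ) (ha : ContDiff ℝ ∞ a) (hb : ContDiff ℝ ∞ b)
    (hbc : HasCompactSupport b) :
    ∫ t in Ioi (0:ℝ), a t * deriv b t = -(a 0 * b 0) - ∫ t in Ioi (0:ℝ), deriv a t * b t := by
  have hab : ContDiff ℝ 1 (fun t => a t * b t) := (ha.mul hb).of_le (by norm_num : (1:WithTop ℕ∞) ≤ ∞)
  have habc : HasCompactSupport (fun t => a t * b t) := hbc.mul_left
  have hderiv : deriv (fun t => a t * b t) = fun t => deriv a t * b t + a t * deriv b t := by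
    funext t
    exact deriv_fun_mul (ha.differentiable (by simp) t) (hb.differentiable (by simp) t)
  have h1 : Integrable (fun t => deriv a t * b t) :=
    (((contDiff_deriv ha).continuous).mul hb.continuous).integrable_of_hasCompactSupport
      hbc.mul_left
  have h2 : Integrable (fun t => a t * deriv b t) :=
    (ha.continuous.mul (contDiff_deriv hb).continuous).integrable_of_hasCompactSupport
      hbc.deriv.mul_left
  have hzero : ∫ t in Ioi (0:ℝ), deriv (fun t => a t * b t) t = -(a 0 * b 0) :=
    habc.integral_Ioi_deriv_eq hab 0
  rw [hderiv, integral_add h1.integrableOn h2.integrableOn] at hzero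
  linarith

lemma parts_Ioi (h g : ℝ → ℝ) (hh : ContDiff ℝ ∞ h) (hg : ContDiff ℝ ∞ g)
    (hgc : HasCompactSupport g) :
    ∫ x in Ioi (0:ℝ), h x * deriv (deriv g) x
      = -(h 0 * deriv g 0) + deriv h 0 * g 0 + ∫ x in Ioi (0:ℝ), deriv (deriv h) x * g x := by
  rw [key_Ioi h (deriv g) hh (contDiff_deriv hg) hgc.deriv]
  have := key_Ioi (deriv h) g (contDiff_deriv hh) hg hgc
  linarith


lemma deriv2_comp_neg (g : ℝ → ℝ) :
    deriv (deriv (fun x => g (-x))) = fun x => deriv (deriv g) (-x) := by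
  have h1 : deriv (fun x => g (-x)) = fun x => -deriv g (-x) :=
    funext fun y => deriv_comp_neg g y
  rw [h1]
  funext x
  rw [deriv.fun_neg]
  rw [show (fun y => deriv g (-y)) = fun y => (deriv g) (-y) from rfl, deriv_comp_neg]
  ring

lemma parts_odd (f g : ℝ → ℝ) (hf : ContDiff ℝ ∞ f) (hg : ContDiff ℝ ∞ g)
    (hgc : HasCompactSupport g) (hf0 : f 0 = 0) :
    ∫ x, (if 0 ≤ x then f x else -f (-x)) * deriv (deriv g) x
      = ∫ x, (if 0 ≤ x then deriv (deriv f) x else -deriv (deriv f) (-x)) * g x := by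
  have one_le : (1 : WithTop ℕ∞) ≤ ∞ := by norm_num
  set f2 := deriv (deriv f) with hf2def
  set g2 := deriv (deriv g) with hg2def
  have hfc : Continuous f := hf.continuous
  have hf2c : Continuous f2 := (contDiff_deriv (contDiff_deriv hf)).continuous
  have hg2c : Continuous g2 := (contDiff_deriv (contDiff_deriv hg)).continuous
  have hgc2 : HasCompactSupport g2 := hgc.deriv.deriv
  have hgneg : ContDiff ℝ ∞ (fun x => g (-x)) := hg.comp (contDiff_id.neg)
  have hgnegc : HasCompactSupport (fun x => g (-x)) := hgc.comp_homeomorph (Homeomorph.neg ℝ)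
  have hgnegc2 : HasCompactSupport (fun x => g (-x)) := hgnegc
  -- integrabilities
  have hint1 : Integrable (fun x => f x * g2 x) :=
    (hfc.mul hg2c).integrable_of_hasCompactSupport hgc2.mul_left
  have hint2 : Integrable (fun x => -f (-x) * g2 x) :=
    (((hfc.comp continuous_neg).neg).mul hg2c).integrable_of_hasCompactSupport hgc2.mul_left
  have hint3 : Integrable (fun x => f2 x * g x) :=
    (hf2c.mul hg.continuous).integrable_of_hasCompactSupport hgc.mul_left
  have hint4 : Integrable (fun x => -f2 (-x) * g x) :=
    (((hf2c.comp continuous_neg).neg).mul hg.continuous).integrable_of_hasCompactSupport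
      hgc.mul_left
  have hL_Ici : IntegrableOn (fun x => (if 0 ≤ x then f x else -f (-x)) * g2 x) (Ici 0) :=
    hint1.integrableOn.congr_fun (fun x hx => by rw [if_pos (mem_Ici.mp hx)]) measurableSet_Ici
  have hL_Iio : IntegrableOn (fun x => (if 0 ≤ x then f x else -f (-x)) * g2 x) (Iio 0) :=
    hint2.integrableOn.congr_fun
      (fun x hx => by rw [if_neg (not_le.mpr (mem_Iio.mp hx))]) measurableSet_Iio
  have hR_Ici : IntegrableOn (fun x => (if 0 ≤ x then f2 x else -f2 (-x)) * g x) (Ici 0) :=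
    hint3.integrableOn.congr_fun (fun x hx => by rw [if_pos (mem_Ici.mp hx)]) measurableSet_Ici
  have hR_Iio : IntegrableOn (fun x => (if 0 ≤ x then f2 x else -f2 (-x)) * g x) (Iio 0) :=
    hint4.integrableOn.congr_fun
      (fun x hx => by rw [if_neg (not_le.mpr (mem_Iio.mp hx))]) measurableSet_Iio
  rw [← intervalIntegral.integral_Iio_add_Ici (b := (0:ℝ)) hL_Iio hL_Ici,
      ← intervalIntegral.integral_Iio_add_Ici (b := (0:ℝ)) hR_Iio hR_Ici]
  -- Ici pieces
  have eL_Ici : ∫ x in Ici (0:ℝ), (if 0 ≤ x then f x else -f (-x)) * g2 x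
      = deriv f 0 * g 0 + ∫ x in Ioi (0:ℝ), f2 x * g x := by
    rw [setIntegral_congr_fun measurableSet_Ici
      (fun x hx => by rw [if_pos (mem_Ici.mp hx)] : EqOn _ (fun x => f x * g2 x) (Ici 0)),
      integral_Ici_eq_integral_Ioi, hg2def, parts_Ioi f g hf hg hgc, hf0]
    ring
  have eR_Ici : ∫ x in Ici (0:ℝ), (if 0 ≤ x then f2 x else -f2 (-x)) * g x
      = ∫ x in Ioi (0:ℝ), f2 x * g x := by
    rw [setIntegral_congr_fun measurableSet_Ici
      (fun x hx => by rw [if_pos (mem_Ici.mp hx)] : EqOn _ (fun x => f2 x * g x) (Ici 0)),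
      integral_Ici_eq_integral_Ioi]
  -- Iio pieces
  have eL_Iio : ∫ x in Iio (0:ℝ), (if 0 ≤ x then f x else -f (-x)) * g2 x
      = -(deriv f 0 * g 0) + ∫ x in Ioi (0:ℝ), -f2 x * g (-x) := by
    rw [setIntegral_congr_fun measurableSet_Iio
      (fun x hx => by rw [if_neg (not_le.mpr (mem_Iio.mp hx))] :
        EqOn _ (fun x => -f (-x) * g2 x) (Iio 0)),
      ← integral_Iic_eq_integral_Iio,
      show (fun x => -f (-x) * g2 x) = fun x => (fun z => -f z * g2 (-z)) (-x) by
        funext x; simp,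
      integral_comp_neg_Iic 0 (fun z => -f z * g2 (-z)), neg_zero]
    have := parts_Ioi (fun z => -f z) (fun x => g (-x)) hf.neg hgneg hgnegc
    rw [deriv2_comp_neg g] at this
    have hnf : deriv (deriv (fun z => -f z)) = fun z => -f2 z := by
      rw [hf2def, deriv.fun_neg', deriv.fun_neg']
    rw [hnf] at this
    simp only [hg2def] at this ⊢
    rw [this]
    have e1 : deriv (fun x => g (-x)) 0 = -deriv g 0 := by
      rw [deriv_comp_neg, neg_zero]
    have e2 : deriv (fun z => -f z) 0 = -deriv f 0 := deriv.fun_neg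
    rw [e1, e2, hf0]
    ring
  have eR_Iio : ∫ x in Iio (0:ℝ), (if 0 ≤ x then f2 x else -f2 (-x)) * g x
      = ∫ x in Ioi (0:ℝ), -f2 x * g (-x) := by
    rw [setIntegral_congr_fun measurableSet_Iio
      (fun x hx => by rw [if_neg (not_le.mpr (mem_Iio.mp hx))] :
        EqOn _ (fun x => -f2 (-x) * g x) (Iio 0)),
      ← integral_Iic_eq_integral_Iio,
      show (fun x => -f2 (-x) * g x) = fun x => (fun z => -f2 z * g (-z)) (-x) by
        funext x; simp,
      integral_comp_neg_Iic 0 (fun z => -f2 z * g (-z)), neg_zero]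
  rw [eL_Ici, eR_Ici, eL_Iio, eR_Iio]
  ring


/-- odd extension -/
noncomputable def V (f : ℝ × ℝ × ℝ → ℝ) : ℝ × ℝ × ℝ → ℝ :=
  fun p => if 0 ≤ p.2.1 then f p else -f (p.1, -p.2.1, p.2.2)

lemma V_apply (f : ℝ × ℝ × ℝ → ℝ) (p : ℝ × ℝ × ℝ) :
    V f p = if 0 ≤ p.2.1 then f p else -f (p.1, -p.2.1, p.2.2) := rfl

lemma cont_V {f : ℝ × ℝ × ℝ → ℝ} (hf : Continuous f) (h0 : ∀ t y : ℝ, f (t, 0, y) = 0) :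
    Continuous (V f) := by
  unfold V
  apply Continuous.if_le
  · exact hf
  · exact (hf.comp (by fun_prop)).neg
  · exact continuous_const
  · exact continuous_fst.comp continuous_snd
  · rintro ⟨t, x, y⟩ hp
    simp only at hp
    subst hp
    simp [h0 t y]

end OddExtAux


open OddExtAux

/-- The odd reflection across `{x = 0}` of a smooth solution of the 2D wave equation on the
halfspace `{x ≥ 0}` vanishing on `{x = 0}` solves the wave equation on all of `ℝ³` in the
sense of distributions. -/
theorem odd_extension_distributional_wave
    (u : ℝ × ℝ × ℝ → ℝ) (hu : ContDiff ℝ (⊤ : ℕ∞) u)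
    (hwave : ∀ t x y : ℝ, 0 ≤ x →
      d1 (d1 u) (t, x, y) - d2 (d2 u) (t, x, y) - d3 (d3 u) (t, x, y) = 0)
    (hbc : ∀ t y : ℝ, u (t, 0, y) = 0) :
    ∀ φ : ℝ × ℝ × ℝ → ℝ, ContDiff ℝ (⊤ : ℕ∞) φ → HasCompactSupport φ →
      (∫ p : ℝ × ℝ × ℝ,
        (if 0 ≤ p.2.1 then u p else -u (p.1, -p.2.1, p.2.2)) *
          (d1 (d1 φ) p - d2 (d2 φ) p - d3 (d3 φ) p)) = 0 := by
  intro φ hφ hφcs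
  have huI : ContDiff ℝ ∞ u := hu.of_le (by simp)
  have hphiI : ContDiff ℝ ∞ φ := hφ.of_le (by simp)
  -- boundary values of second derivatives vanish
  have hz1 : ∀ t y : ℝ, d1 (d1 u) (t, 0, y) = 0 := by
    intro t y
    have hs : (fun s => d1 u (s, (0:ℝ), y)) = fun _ => (0:ℝ) := by
      funext s
      show deriv (fun r => u (r, (0:ℝ), y)) s = 0
      rw [show (fun r => u (r, (0:ℝ), y)) = fun _ => (0:ℝ) from funext fun r => hbc r y,
        deriv_const]
    show deriv (fun s => d1 u (s, (0:ℝ), y)) t = 0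
    rw [hs, deriv_const]
  have hz3 : ∀ t y : ℝ, d3 (d3 u) (t, 0, y) = 0 := by
    intro t y
    have hs : (fun s => d3 u (t, (0:ℝ), s)) = fun _ => (0:ℝ) := by
      funext s
      show deriv (fun r => u (t, (0:ℝ), r)) s = 0
      rw [show (fun r => u (t, (0:ℝ), r)) = fun _ => (0:ℝ) from funext fun r => hbc t r,
        deriv_const]
    show deriv (fun s => d3 u (t, (0:ℝ), s)) y = 0
    rw [hs, deriv_const]
  have hz2 : ∀ t y : ℝ, d2 (d2 u) (t, 0, y) = 0 := by
    intro t y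
    have h := hwave t 0 y le_rfl
    rw [hz1 t y, hz3 t y] at h
    linarith
  -- continuity
  have hvC : Continuous (V u) := cont_V hu.continuous hbc
  have hw1C : Continuous (V (d1 (d1 u))) :=
    cont_V (contDiff_d1 (contDiff_d1 hu)).continuous hz1
  have hw2C : Continuous (V (d2 (d2 u))) :=
    cont_V (contDiff_d2 (contDiff_d2 hu)).continuous hz2
  have hw3C : Continuous (V (d3 (d3 u))) :=
    cont_V (contDiff_d3 (contDiff_d3 hu)).continuous hz3
  -- derivatives of φ : continuity and compact support
  have hD1C : Continuous (d1 (d1 φ)) := (contDiff_d1 (contDiff_d1 hφ)).continuous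
  have hD2C : Continuous (d2 (d2 φ)) := (contDiff_d2 (contDiff_d2 hφ)).continuous
  have hD3C : Continuous (d3 (d3 φ)) := (contDiff_d3 (contDiff_d3 hφ)).continuous
  have hD1cs : HasCompactSupport (d1 (d1 φ)) := hcs_d1 (contDiff_d1 hφ) (hcs_d1 hφ hφcs)
  have hD2cs : HasCompactSupport (d2 (d2 φ)) := hcs_d2 (contDiff_d2 hφ) (hcs_d2 hφ hφcs)
  have hD3cs : HasCompactSupport (d3 (d3 φ)) := hcs_d3 (contDiff_d3 hφ) (hcs_d3 hφ hφcs)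
  -- integrability of the six products
  have hintL1 : Integrable (fun p => V u p * d1 (d1 φ) p) :=
    (hvC.mul hD1C).integrable_of_hasCompactSupport hD1cs.mul_left
  have hintL2 : Integrable (fun p => V u p * d2 (d2 φ) p) :=
    (hvC.mul hD2C).integrable_of_hasCompactSupport hD2cs.mul_left
  have hintL3 : Integrable (fun p => V u p * d3 (d3 φ) p) :=
    (hvC.mul hD3C).integrable_of_hasCompactSupport hD3cs.mul_left
  have hintR1 : Integrable (fun p => V (d1 (d1 u)) p * φ p) :=
    (hw1C.mul hφ.continuous).integrable_of_hasCompactSupport hφcs.mul_left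
  have hintR2 : Integrable (fun p => V (d2 (d2 u)) p * φ p) :=
    (hw2C.mul hφ.continuous).integrable_of_hasCompactSupport hφcs.mul_left
  have hintR3 : Integrable (fun p => V (d3 (d3 u)) p * φ p) :=
    (hw3C.mul hφ.continuous).integrable_of_hasCompactSupport hφcs.mul_left
  have hintL12 : Integrable (fun p : ℝ × ℝ × ℝ => V u p * d1 (d1 φ) p - V u p * d2 (d2 φ) p) :=
    hintL1.sub hintL2
  have hintR12 : Integrable
      (fun p : ℝ × ℝ × ℝ => V (d1 (d1 u)) p * φ p - V (d2 (d2 u)) p * φ p) :=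
    hintR1.sub hintR2
  -- the three integration-by-parts identities
  have eq1 : (∫ p : ℝ × ℝ × ℝ, V u p * d1 (d1 φ) p)
      = ∫ p : ℝ × ℝ × ℝ, V (d1 (d1 u)) p * φ p := by
    have h1 := hintL1
    have h2 := hintR1
    rw [Measure.volume_eq_prod] at h1 h2
    rw [show (volume : Measure (ℝ × ℝ × ℝ)) = (volume : Measure ℝ).prod volume from
      Measure.volume_eq_prod ℝ (ℝ × ℝ), integral_prod_symm _ h1, integral_prod_symm _ h2]
    refine integral_congr_ae (Filter.Eventually.of_forall ?_)
    rintro ⟨x, y⟩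
    by_cases hx : (0:ℝ) ≤ x
    · simp only [V_apply, if_pos hx]
      exact parts_line (fun t => u (t, x, y)) (fun t => φ (t, x, y))
        (huI.comp (contDiff_id.prodMk contDiff_const))
        (hphiI.comp (contDiff_id.prodMk contDiff_const)) (slice_cs_t hφcs x y)
    · simp only [V_apply, if_neg hx]
      have key := parts_line (fun t => -u (t, -x, y)) (fun t => φ (t, x, y))
        ((huI.comp (contDiff_id.prodMk contDiff_const)).neg)
        (hphiI.comp (contDiff_id.prodMk contDiff_const)) (slice_cs_t hφcs x y)
      have hneg : deriv (deriv (fun t => -u (t, -x, y)))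
          = fun t => -deriv (deriv (fun t => u (t, -x, y))) t := by
        rw [deriv.fun_neg', deriv.fun_neg']
      rw [hneg] at key
      exact key
  have eq3 : (∫ p : ℝ × ℝ × ℝ, V u p * d3 (d3 φ) p)
      = ∫ p : ℝ × ℝ × ℝ, V (d3 (d3 u)) p * φ p := by
    have h1 := hintL3
    have h2 := hintR3
    rw [Measure.volume_eq_prod] at h1 h2
    rw [show (volume : Measure (ℝ × ℝ × ℝ)) = (volume : Measure ℝ).prod volume from
      Measure.volume_eq_prod ℝ (ℝ × ℝ), integral_prod _ h1, integral_prod _ h2]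
    refine integral_congr_ae (Filter.Eventually.of_forall ?_)
    intro t
    -- slice in q = (x, y) : integrable and continuous
    show (∫ q : ℝ × ℝ, V u (t, q) * d3 (d3 φ) (t, q))
      = ∫ q : ℝ × ℝ, V (d3 (d3 u)) (t, q) * φ (t, q)
    have hA : Integrable (fun q : ℝ × ℝ => V u (t, q) * d3 (d3 φ) (t, q)) :=
      ((hvC.mul hD3C).comp (Continuous.prodMk_right t)).integrable_of_hasCompactSupport
        (slice_cs_q hD3cs.mul_left t)
    have hB : Integrable (fun q : ℝ × ℝ => V (d3 (d3 u)) (t, q) * φ (t, q)) :=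
      ((hw3C.mul hφ.continuous).comp (Continuous.prodMk_right t)).integrable_of_hasCompactSupport
        (slice_cs_q hφcs.mul_left t)
    rw [Measure.volume_eq_prod] at hA hB
    rw [show (volume : Measure (ℝ × ℝ)) = (volume : Measure ℝ).prod volume from
      Measure.volume_eq_prod ℝ ℝ, integral_prod _ hA, integral_prod _ hB]
    refine integral_congr_ae (Filter.Eventually.of_forall ?_)
    intro x
    by_cases hx : (0:ℝ) ≤ x
    · simp only [V_apply, if_pos hx]
      exact parts_line (fun s => u (t, x, s)) (fun s => φ (t, x, s))
        (huI.comp (contDiff_const.prodMk (contDiff_const.prodMk contDiff_id)))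
        (hphiI.comp (contDiff_const.prodMk (contDiff_const.prodMk contDiff_id)))
        (slice_cs_y hφcs t x)
    · simp only [V_apply, if_neg hx]
      have key := parts_line (fun s => -u (t, -x, s)) (fun s => φ (t, x, s))
        ((huI.comp (contDiff_const.prodMk (contDiff_const.prodMk contDiff_id))).neg)
        (hphiI.comp (contDiff_const.prodMk (contDiff_const.prodMk contDiff_id)))
        (slice_cs_y hφcs t x)
      have hneg : deriv (deriv (fun s => -u (t, -x, s)))
          = fun s => -deriv (deriv (fun s => u (t, -x, s))) s := by
        rw [deriv.fun_neg', deriv.fun_neg']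
      rw [hneg] at key
      exact key
  have eq2 : (∫ p : ℝ × ℝ × ℝ, V u p * d2 (d2 φ) p)
      = ∫ p : ℝ × ℝ × ℝ, V (d2 (d2 u)) p * φ p := by
    have h1 := hintL2
    have h2 := hintR2
    rw [Measure.volume_eq_prod] at h1 h2
    rw [show (volume : Measure (ℝ × ℝ × ℝ)) = (volume : Measure ℝ).prod volume from
      Measure.volume_eq_prod ℝ (ℝ × ℝ), integral_prod _ h1, integral_prod _ h2]
    refine integral_congr_ae (Filter.Eventually.of_forall ?_)
    intro t
    show (∫ q : ℝ × ℝ, V u (t, q) * d2 (d2 φ) (t, q))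
      = ∫ q : ℝ × ℝ, V (d2 (d2 u)) (t, q) * φ (t, q)
    have hA : Integrable (fun q : ℝ × ℝ => V u (t, q) * d2 (d2 φ) (t, q)) :=
      ((hvC.mul hD2C).comp (Continuous.prodMk_right t)).integrable_of_hasCompactSupport
        (slice_cs_q hD2cs.mul_left t)
    have hB : Integrable (fun q : ℝ × ℝ => V (d2 (d2 u)) (t, q) * φ (t, q)) :=
      ((hw2C.mul hφ.continuous).comp (Continuous.prodMk_right t)).integrable_of_hasCompactSupport
        (slice_cs_q hφcs.mul_left t)
    rw [Measure.volume_eq_prod] at hA hB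
    rw [show (volume : Measure (ℝ × ℝ)) = (volume : Measure ℝ).prod volume from
      Measure.volume_eq_prod ℝ ℝ, integral_prod_symm _ hA, integral_prod_symm _ hB]
    refine integral_congr_ae (Filter.Eventually.of_forall ?_)
    intro y
    exact parts_odd (fun x => u (t, x, y)) (fun x => φ (t, x, y))
      (huI.comp (contDiff_const.prodMk (contDiff_id.prodMk contDiff_const)))
      (hphiI.comp (contDiff_const.prodMk (contDiff_id.prodMk contDiff_const)))
      (slice_cs_x hφcs t y) (hbc t y)
  -- put everything together
  have hsplit : (∫ p : ℝ × ℝ × ℝ,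
        (if 0 ≤ p.2.1 then u p else -u (p.1, -p.2.1, p.2.2)) *
          (d1 (d1 φ) p - d2 (d2 φ) p - d3 (d3 φ) p))
      = ∫ p : ℝ × ℝ × ℝ,
        (V u p * d1 (d1 φ) p - V u p * d2 (d2 φ) p - V u p * d3 (d3 φ) p) := by
    refine integral_congr_ae (Filter.Eventually.of_forall fun p => ?_)
    simp only [V_apply]
    ring
  have hfun : (fun p : ℝ × ℝ × ℝ =>
      V (d1 (d1 u)) p * φ p - V (d2 (d2 u)) p * φ p - V (d3 (d3 u)) p * φ p)
      = fun _ => (0:ℝ) := by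
    funext p
    obtain ⟨t, x, y⟩ := p
    by_cases hx : (0:ℝ) ≤ x
    · simp only [V_apply, if_pos hx]
      have h := hwave t x y hx
      rw [show d1 (d1 u) (t, x, y) * φ (t, x, y) - d2 (d2 u) (t, x, y) * φ (t, x, y)
          - d3 (d3 u) (t, x, y) * φ (t, x, y)
          = (d1 (d1 u) (t, x, y) - d2 (d2 u) (t, x, y) - d3 (d3 u) (t, x, y)) * φ (t, x, y)
        from by ring, h, zero_mul]
    · simp only [V_apply, if_neg hx]
      have h := hwave t (-x) y (by linarith [not_le.mp hx])
      rw [show -d1 (d1 u) (t, -x, y) * φ (t, x, y) - -d2 (d2 u) (t, -x, y) * φ (t, x, y)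
          - -d3 (d3 u) (t, -x, y) * φ (t, x, y)
          = -((d1 (d1 u) (t, -x, y) - d2 (d2 u) (t, -x, y) - d3 (d3 u) (t, -x, y))
              * φ (t, x, y))
        from by ring, h, zero_mul, neg_zero]
  have hz0 : ∫ p : ℝ × ℝ × ℝ,
      (V (d1 (d1 u)) p * φ p - V (d2 (d2 u)) p * φ p - V (d3 (d3 u)) p * φ p) = 0 := by
    rw [hfun]
    simp
  have expand : ∫ p : ℝ × ℝ × ℝ,
      (V (d1 (d1 u)) p * φ p - V (d2 (d2 u)) p * φ p - V (d3 (d3 u)) p * φ p)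
      = (∫ p : ℝ × ℝ × ℝ, V (d1 (d1 u)) p * φ p) - (∫ p : ℝ × ℝ × ℝ, V (d2 (d2 u)) p * φ p)
        - ∫ p : ℝ × ℝ × ℝ, V (d3 (d3 u)) p * φ p := by
    rw [integral_sub hintR12 hintR3, integral_sub hintR1 hintR2]
  rw [hsplit, integral_sub hintL12 hintL3, integral_sub hintL1 hintL2, eq1, eq2, eq3]
  rw [expand] at hz0
  linarith
end

section
/- Let u : ℝ³ → ℝ (with coordinates (t,x,y)) be C^∞ on ℝ³ and satisfy ∂²u/∂t² − ∂²u/∂x² − ∂²u/∂y² = 0 at every point (t,x,y) with x ≥ 0, together with the Neumann condition (∂u/∂x)(t,0,y) = 0 for all t,y ∈ ℝ. Define the even extension v : ℝ³ → ℝ by v(t,x,y) = u(t,|x|,y). Then v is a distributional solution of the wave equation on all of ℝ³: for every C^∞ compactly supported function φ : ℝ³ → ℝ, ∫_{ℝ³} v(t,x,y) · (∂²φ/∂t² − ∂²φ/∂x² − ∂²φ/∂y²)(t,x,y) dt dx dy = 0. -/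
open MeasureTheory Filter
open scoped ContDiff

section helpersX

lemma sect1 {u : ℝ × ℝ × ℝ → ℝ} (hu : ContDiff ℝ ∞ u) (a b : ℝ) :
    ContDiff ℝ ∞ fun s => u (s, a, b) :=
  hu.comp (contDiff_id.prodMk (contDiff_const.prodMk contDiff_const))

lemma sect2 {u : ℝ × ℝ × ℝ → ℝ} (hu : ContDiff ℝ ∞ u) (a b : ℝ) :
    ContDiff ℝ ∞ fun s => u (a, s, b) :=
  hu.comp (contDiff_const.prodMk (contDiff_id.prodMk contDiff_const))

lemma sect3 {u : ℝ × ℝ × ℝ → ℝ} (hu : ContDiff ℝ ∞ u) (a b : ℝ) :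
    ContDiff ℝ ∞ fun s => u (a, b, s) :=
  hu.comp (contDiff_const.prodMk (contDiff_const.prodMk contDiff_id))

end helpersX



section helpersY


lemma hcs_comp {α β : Type*} [TopologicalSpace α] [TopologicalSpace β] [T2Space β]
    {φ : α → ℝ} (hφ : HasCompactSupport φ) {j : β → α} {l : α → β}
    (hl : Continuous l) (hlj : ∀ s, l (j s) = s) :
    HasCompactSupport (fun s => φ (j s)) := by
  apply IsCompact.of_isClosed_subset (hφ.image hl) isClosed_closure
  apply closure_minimal _ (hφ.image hl).isClosed
  intro s hs
  exact ⟨j s, subset_tsupport φ hs, hlj s⟩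

lemma support_d1 (φ : ℝ × ℝ × ℝ → ℝ) : Function.support (d1 φ) ⊆ tsupport φ := by
  intro p hp
  by_contra hmem
  apply hp
  have hc : Continuous fun s : ℝ => ((s, p.2.1, p.2.2) : ℝ × ℝ × ℝ) := by continuity
  have hev : (fun s => φ (s, p.2.1, p.2.2)) =ᶠ[nhds p.1] fun _ => (0 : ℝ) := by
    have hm : ∀ᶠ s in nhds p.1, ((s, p.2.1, p.2.2) : ℝ × ℝ × ℝ) ∈ (tsupport φ)ᶜ :=
      hc.continuousAt.preimage_mem_nhds ((isClosed_tsupport φ).isOpen_compl.mem_nhds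
        (by simpa using hmem))
    filter_upwards [hm] with s hs
    exact image_eq_zero_of_notMem_tsupport hs
  show d1 φ p = 0
  unfold d1
  rw [hev.deriv_eq]
  simp

lemma support_d2 (φ : ℝ × ℝ × ℝ → ℝ) : Function.support (d2 φ) ⊆ tsupport φ := by
  intro p hp
  by_contra hmem
  apply hp
  have hc : Continuous fun s : ℝ => ((p.1, s, p.2.2) : ℝ × ℝ × ℝ) := by continuity
  have hev : (fun s => φ (p.1, s, p.2.2)) =ᶠ[nhds p.2.1] fun _ => (0 : ℝ) := by
    have hm : ∀ᶠ s in nhds p.2.1, ((p.1, s, p.2.2) : ℝ × ℝ × ℝ) ∈ (tsupport φ)ᶜ :=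
      hc.continuousAt.preimage_mem_nhds ((isClosed_tsupport φ).isOpen_compl.mem_nhds
        (by simpa using hmem))
    filter_upwards [hm] with s hs
    exact image_eq_zero_of_notMem_tsupport hs
  show d2 φ p = 0
  unfold d2
  rw [hev.deriv_eq]
  simp

lemma support_d3 (φ : ℝ × ℝ × ℝ → ℝ) : Function.support (d3 φ) ⊆ tsupport φ := by
  intro p hp
  by_contra hmem
  apply hp
  have hc : Continuous fun s : ℝ => ((p.1, p.2.1, s) : ℝ × ℝ × ℝ) := by continuity
  have hev : (fun s => φ (p.1, p.2.1, s)) =ᶠ[nhds p.2.2] fun _ => (0 : ℝ) := by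
    have hm : ∀ᶠ s in nhds p.2.2, ((p.1, p.2.1, s) : ℝ × ℝ × ℝ) ∈ (tsupport φ)ᶜ :=
      hc.continuousAt.preimage_mem_nhds ((isClosed_tsupport φ).isOpen_compl.mem_nhds
        (by simpa using hmem))
    filter_upwards [hm] with s hs
    exact image_eq_zero_of_notMem_tsupport hs
  show d3 φ p = 0
  unfold d3
  rw [hev.deriv_eq]
  simp

lemma hcs_of_support_subset {f g : ℝ × ℝ × ℝ → ℝ} (h : Function.support f ⊆ tsupport g)
    (hg : HasCompactSupport g) : HasCompactSupport f :=
  IsCompact.of_isClosed_subset hg isClosed_closure (closure_minimal h hg.isClosed)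

lemma d1_eq_fderiv {u : ℝ × ℝ × ℝ → ℝ} (hu : Differentiable ℝ u) :
    d1 u = fun p => fderiv ℝ u p (1, 0, 0) :=
  funext fun p =>
    (((hu p).hasFDerivAt).comp_hasDerivAt p.1
      ((hasDerivAt_id p.1).prodMk
        ((hasDerivAt_const p.1 p.2.1).prodMk (hasDerivAt_const p.1 p.2.2)))).deriv

lemma d2_eq_fderiv {u : ℝ × ℝ × ℝ → ℝ} (hu : Differentiable ℝ u) :
    d2 u = fun p => fderiv ℝ u p (0, 1, 0) :=
  funext fun p =>
    (((hu p).hasFDerivAt).comp_hasDerivAt p.2.1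
      ((hasDerivAt_const p.2.1 p.1).prodMk
        ((hasDerivAt_id p.2.1).prodMk (hasDerivAt_const p.2.1 p.2.2)))).deriv

lemma d3_eq_fderiv {u : ℝ × ℝ × ℝ → ℝ} (hu : Differentiable ℝ u) :
    d3 u = fun p => fderiv ℝ u p (0, 0, 1) :=
  funext fun p =>
    (((hu p).hasFDerivAt).comp_hasDerivAt p.2.2
      ((hasDerivAt_const p.2.2 p.1).prodMk
        ((hasDerivAt_const p.2.2 p.2.1).prodMk (hasDerivAt_id p.2.2)))).deriv

lemma contDiff_d1 {u : ℝ × ℝ × ℝ → ℝ} (hu : ContDiff ℝ (⊤ : ℕ∞) u) : ContDiff ℝ (⊤ : ℕ∞) (d1 u) := by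
  rw [d1_eq_fderiv (hu.differentiable (by simp))]
  exact (hu.fderiv_right (by simp)).clm_apply contDiff_const

lemma contDiff_d2 {u : ℝ × ℝ × ℝ → ℝ} (hu : ContDiff ℝ (⊤ : ℕ∞) u) : ContDiff ℝ (⊤ : ℕ∞) (d2 u) := by
  rw [d2_eq_fderiv (hu.differentiable (by simp))]
  exact (hu.fderiv_right (by simp)).clm_apply contDiff_const

lemma contDiff_d3 {u : ℝ × ℝ × ℝ → ℝ} (hu : ContDiff ℝ (⊤ : ℕ∞) u) : ContDiff ℝ (⊤ : ℕ∞) (d3 u) := by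
  rw [d3_eq_fderiv (hu.differentiable (by simp))]
  exact (hu.fderiv_right (by simp)).clm_apply contDiff_const



lemma ibp2 {f ψ : ℝ → ℝ} (f1 f2 : ℝ → ℝ)
    (hf1 : ∀ x, HasDerivAt f (f1 x) x) (hf2 : ∀ x, HasDerivAt f1 (f2 x) x)
    (hfc : Continuous f) (hf2c : Continuous f2)
    (hψ : ContDiff ℝ ∞ ψ) (hψc : HasCompactSupport ψ) :
    ∫ x, f x * deriv (deriv ψ) x = ∫ x, f2 x * ψ x := by
  have h1 : (1 : WithTop ℕ∞) ≤ ∞ := by exact_mod_cast le_top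
  set ψ1 := deriv ψ with hψ1def
  have hψd : ContDiff ℝ ∞ ψ1 := (contDiff_infty_iff_deriv.mp hψ).2
  have hψ1 : ∀ x, HasDerivAt ψ (ψ1 x) x := fun x => ((hψ.differentiable (by simp)) x).hasDerivAt
  have hψ2 : ∀ x, HasDerivAt ψ1 (deriv ψ1 x) x :=
    fun x => ((hψd.differentiable (by simp)) x).hasDerivAt
  have hψ1c : HasCompactSupport ψ1 := hψc.deriv
  have hψ2c : HasCompactSupport (deriv ψ1) := hψ1c.deriv
  have cψ : Continuous ψ := hψ.continuous
  have cψ1 : Continuous ψ1 := hψd.continuous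
  have cψ2 : Continuous (deriv ψ1) := (contDiff_infty_iff_deriv.mp hψd).2.continuous
  have hf1c : Continuous f1 :=
    Differentiable.continuous (fun x => (hf2 x).differentiableAt)
  have i1 : Integrable (f * deriv ψ1) :=
    (hfc.mul cψ2).integrable_of_hasCompactSupport hψ2c.mul_left
  have i2 : Integrable (f1 * ψ1) :=
    (hf1c.mul cψ1).integrable_of_hasCompactSupport hψ1c.mul_left
  have i3 : Integrable (f * ψ1) :=
    (hfc.mul cψ1).integrable_of_hasCompactSupport hψ1c.mul_left
  have i4 : Integrable (f2 * ψ) :=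
    (hf2c.mul cψ).integrable_of_hasCompactSupport hψc.mul_left
  have i5 : Integrable (f1 * ψ) :=
    (hf1c.mul cψ).integrable_of_hasCompactSupport hψc.mul_left
  have step1 : ∫ x, f x * deriv ψ1 x = -∫ x, f1 x * ψ1 x :=
    integral_mul_deriv_eq_deriv_mul_of_integrable (fun x _ => hf1 x) (fun x _ => hψ2 x) i1 i2 i3
  have step2 : ∫ x, f1 x * ψ1 x = -∫ x, f2 x * ψ x :=
    integral_mul_deriv_eq_deriv_mul_of_integrable (fun x _ => hf2 x) (fun x _ => hψ1 x) i2 i4 i5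
  rw [step1, step2, neg_neg]

lemma even_ext {g g1 g2 : ℝ → ℝ}
    (hg1 : ∀ x, HasDerivAt g (g1 x) x) (hg2 : ∀ x, HasDerivAt g1 (g2 x) x)
    (hc1 : Continuous g1) (hc2 : Continuous g2) (h0 : g1 0 = 0) :
    (∀ x, HasDerivAt (fun s => g |s|)
        ((fun x => if x < 0 then -g1 (-x) else g1 x) x) x) ∧
    (∀ x, HasDerivAt (fun x => if x < 0 then -g1 (-x) else g1 x) (g2 |x|) x) := by
  set E : ℝ → ℝ := fun x => if x < 0 then -g1 (-x) else g1 x with hE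
  have hgc : Continuous g := Differentiable.continuous (fun x => (hg1 x).differentiableAt)
  have hE0 : E 0 = 0 := by simp [hE, h0]
  have hEc0 : ContinuousAt E 0 := by
    have habs : ∀ x, ‖E x‖ ≤ abs (g1 (abs x)) := by
      intro x
      by_cases hx : x < 0
      · simp only [Real.norm_eq_abs, hE, if_pos hx, abs_neg, abs_of_neg hx, le_refl]
      · simp only [Real.norm_eq_abs, hE, if_neg hx, abs_of_nonneg (not_lt.mp hx), le_refl]
    have htend : Tendsto (fun x : ℝ => abs (g1 (abs x))) (nhds 0) (nhds 0) := by
      have := ((hc1.comp continuous_abs).abs.tendsto 0)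
      simpa [h0] using this
    have : Tendsto E (nhds 0) (nhds 0) := squeeze_zero_norm habs htend
    simpa [ContinuousAt, hE0] using this
  constructor
  · intro x
    apply hasDerivAt_of_hasDerivAt_of_ne' (x := 0) _ _ hEc0
    · intro y hy
      rcases hy.lt_or_gt with hy' | hy'
      · have hd : HasDerivAt (fun s => g (-s)) (g1 (-y) * (-1)) y :=
          (hg1 (-y)).comp y (hasDerivAt_neg y)
        have he : (fun s => g |s|) =ᶠ[nhds y] fun s => g (-s) := by
          filter_upwards [eventually_of_mem (isOpen_Iio.mem_nhds hy') fun s hs => hs] with s hs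
          rw [abs_of_neg hs]
        have h2 : HasDerivAt (fun s => g |s|) (g1 (-y) * (-1)) y := hd.congr_of_eventuallyEq he
        refine h2.congr_deriv ?_
        simp only [hE, if_pos hy']
        ring
      · have he : (fun s => g |s|) =ᶠ[nhds y] g := by
          filter_upwards [eventually_of_mem (isOpen_Ioi.mem_nhds hy') fun s hs => hs] with s hs
          rw [abs_of_pos hs]
        have h2 : HasDerivAt (fun s => g |s|) (g1 y) y := (hg1 y).congr_of_eventuallyEq he
        refine h2.congr_deriv ?_
        simp only [hE, if_neg (not_lt.mpr hy'.le)]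
    · exact (hgc.comp continuous_abs).continuousAt
  · intro x
    apply hasDerivAt_of_hasDerivAt_of_ne' (x := 0) _ hEc0
      ((hc2.comp continuous_abs).continuousAt)
    intro y hy
    rcases hy.lt_or_gt with hy' | hy'
    · have hd : HasDerivAt (fun s => -g1 (-s)) (-(g2 (-y) * (-1))) y :=
        ((hg2 (-y)).comp y (hasDerivAt_neg y)).neg
      have he : E =ᶠ[nhds y] fun s => -g1 (-s) := by
        filter_upwards [eventually_of_mem (isOpen_Iio.mem_nhds hy') fun s hs => hs] with s hs
        have hs' : s < 0 := hs
        simp only [hE, if_pos hs']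
      have h2 : HasDerivAt E (-(g2 (-y) * (-1))) y := hd.congr_of_eventuallyEq he
      refine h2.congr_deriv ?_
      simp only [Function.comp_apply, abs_of_neg hy']
      ring
    · have he : E =ᶠ[nhds y] g1 := by
        filter_upwards [eventually_of_mem (isOpen_Ioi.mem_nhds hy') fun s hs => hs] with s hs
        have hs' : (0:ℝ) < s := hs
        simp only [hE, if_neg (not_lt.mpr hs'.le)]
      have h2 : HasDerivAt E (g2 y) y := (hg2 y).congr_of_eventuallyEq he
      refine h2.congr_deriv ?_
      simp only [Function.comp_apply, abs_of_pos hy']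

lemma ibp2_smooth {f ψ : ℝ → ℝ} (hf : ContDiff ℝ ∞ f)
    (hψ : ContDiff ℝ ∞ ψ) (hψc : HasCompactSupport ψ) :
    ∫ x, f x * deriv (deriv ψ) x = ∫ x, deriv (deriv f) x * ψ x := by
  have h1 : (1 : WithTop ℕ∞) ≤ ∞ := by exact_mod_cast le_top
  have hfd : ContDiff ℝ ∞ (deriv f) := (contDiff_infty_iff_deriv.mp hf).2
  exact ibp2 (deriv f) (deriv (deriv f))
    (fun x => ((hf.differentiable (by simp)) x).hasDerivAt)
    (fun x => ((hfd.differentiable (by simp)) x).hasDerivAt)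
    hf.continuous ((contDiff_infty_iff_deriv.mp hfd).2.continuous) hψ hψc

lemma ibp2_even {g ψ : ℝ → ℝ} (hg : ContDiff ℝ ∞ g) (h0 : deriv g 0 = 0)
    (hψ : ContDiff ℝ ∞ ψ) (hψc : HasCompactSupport ψ) :
    ∫ x, g |x| * deriv (deriv ψ) x = ∫ x, deriv (deriv g) |x| * ψ x := by
  have h1 : (1 : WithTop ℕ∞) ≤ ∞ := by exact_mod_cast le_top
  have hgd : ContDiff ℝ ∞ (deriv g) := (contDiff_infty_iff_deriv.mp hg).2
  have hgdd : Continuous (deriv (deriv g)) := (contDiff_infty_iff_deriv.mp hgd).2.continuous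
  obtain ⟨ha, hb⟩ := even_ext (g := g) (g1 := deriv g) (g2 := deriv (deriv g))
    (fun x => ((hg.differentiable (by simp)) x).hasDerivAt)
    (fun x => ((hgd.differentiable (by simp)) x).hasDerivAt)
    hgd.continuous hgdd h0
  exact ibp2 _ _ ha hb (hg.continuous.comp continuous_abs)
    (hgdd.comp continuous_abs) hψ hψc

end helpersY


/-- The even reflection across `{x = 0}` of a smooth solution of the 2D wave equation on the
halfspace `{x ≥ 0}` with vanishing normal derivative on `{x = 0}` solves the wave equation on all of `ℝ³` in the
sense of distributions. -/
theorem even_extension_distributional_wave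
    (u : ℝ × ℝ × ℝ → ℝ) (hu : ContDiff ℝ (⊤ : ℕ∞) u)
    (hwave : ∀ t x y : ℝ, 0 ≤ x →
      d1 (d1 u) (t, x, y) - d2 (d2 u) (t, x, y) - d3 (d3 u) (t, x, y) = 0)
    (hbc : ∀ t y : ℝ, d2 u (t, 0, y) = 0) :
    ∀ φ : ℝ × ℝ × ℝ → ℝ, ContDiff ℝ (⊤ : ℕ∞) φ → HasCompactSupport φ →
      (∫ p : ℝ × ℝ × ℝ,
        u (p.1, |p.2.1|, p.2.2) *
          (d1 (d1 φ) p - d2 (d2 φ) p - d3 (d3 φ) p)) = 0 := by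
  intro φ hφ hφc
  have hu' : ContDiff ℝ ∞ u := hu.of_le (by simp)
  have hφ' : ContDiff ℝ ∞ φ := hφ.of_le (by simp)
  -- continuity of the reflection map and of the reflected function
  have cm : Continuous (fun p : ℝ × ℝ × ℝ => ((p.1, |p.2.1|, p.2.2) : ℝ × ℝ × ℝ)) :=
    continuous_fst.prodMk (((continuous_fst.comp continuous_snd).abs).prodMk
      (continuous_snd.comp continuous_snd))
  have cv : Continuous (fun p : ℝ × ℝ × ℝ => u (p.1, |p.2.1|, p.2.2)) := hu.continuous.comp cm
  -- continuity of second derivatives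
  have cA : Continuous (d1 (d1 φ)) := (contDiff_d1 (contDiff_d1 hφ)).continuous
  have cB : Continuous (d2 (d2 φ)) := (contDiff_d2 (contDiff_d2 hφ)).continuous
  have cC : Continuous (d3 (d3 φ)) := (contDiff_d3 (contDiff_d3 hφ)).continuous
  have cW1 : Continuous (fun p : ℝ × ℝ × ℝ => d1 (d1 u) (p.1, |p.2.1|, p.2.2)) :=
    (contDiff_d1 (contDiff_d1 hu)).continuous.comp cm
  have cW2 : Continuous (fun p : ℝ × ℝ × ℝ => d2 (d2 u) (p.1, |p.2.1|, p.2.2)) :=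
    (contDiff_d2 (contDiff_d2 hu)).continuous.comp cm
  have cW3 : Continuous (fun p : ℝ × ℝ × ℝ => d3 (d3 u) (p.1, |p.2.1|, p.2.2)) :=
    (contDiff_d3 (contDiff_d3 hu)).continuous.comp cm
  -- compact supports
  have hA : HasCompactSupport (d1 (d1 φ)) :=
    hcs_of_support_subset ((support_d1 (d1 φ)).trans
      (closure_minimal (support_d1 φ) (isClosed_tsupport φ))) hφc
  have hB : HasCompactSupport (d2 (d2 φ)) :=
    hcs_of_support_subset ((support_d2 (d2 φ)).trans
      (closure_minimal (support_d2 φ) (isClosed_tsupport φ))) hφc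
  have hC : HasCompactSupport (d3 (d3 φ)) :=
    hcs_of_support_subset ((support_d3 (d3 φ)).trans
      (closure_minimal (support_d3 φ) (isClosed_tsupport φ))) hφc
  -- integrabilities on ℝ³
  have iF1 : Integrable (fun p : ℝ × ℝ × ℝ => u (p.1, |p.2.1|, p.2.2) * d1 (d1 φ) p) :=
    (cv.mul cA).integrable_of_hasCompactSupport hA.mul_left
  have iF2 : Integrable (fun p : ℝ × ℝ × ℝ => u (p.1, |p.2.1|, p.2.2) * d2 (d2 φ) p) :=
    (cv.mul cB).integrable_of_hasCompactSupport hB.mul_left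
  have iF3 : Integrable (fun p : ℝ × ℝ × ℝ => u (p.1, |p.2.1|, p.2.2) * d3 (d3 φ) p) :=
    (cv.mul cC).integrable_of_hasCompactSupport hC.mul_left
  have iG1 : Integrable (fun p : ℝ × ℝ × ℝ => d1 (d1 u) (p.1, |p.2.1|, p.2.2) * φ p) :=
    (cW1.mul hφ.continuous).integrable_of_hasCompactSupport hφc.mul_left
  have iG2 : Integrable (fun p : ℝ × ℝ × ℝ => d2 (d2 u) (p.1, |p.2.1|, p.2.2) * φ p) :=
    (cW2.mul hφ.continuous).integrable_of_hasCompactSupport hφc.mul_left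
  have iG3 : Integrable (fun p : ℝ × ℝ × ℝ => d3 (d3 u) (p.1, |p.2.1|, p.2.2) * φ p) :=
    (cW3.mul hφ.continuous).integrable_of_hasCompactSupport hφc.mul_left
  -- Claim 1 : the t-direction
  have claim1 : (∫ p : ℝ × ℝ × ℝ, u (p.1, |p.2.1|, p.2.2) * d1 (d1 φ) p)
      = ∫ p : ℝ × ℝ × ℝ, d1 (d1 u) (p.1, |p.2.1|, p.2.2) * φ p := by
    have e1 : (∫ p : ℝ × ℝ × ℝ, u (p.1, |p.2.1|, p.2.2) * d1 (d1 φ) p)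
        = ∫ w : ℝ × ℝ, ∫ t : ℝ, u (t, |w.1|, w.2) * d1 (d1 φ) (t, w.1, w.2) :=
      integral_prod_symm _ iF1
    have e3 : (∫ p : ℝ × ℝ × ℝ, d1 (d1 u) (p.1, |p.2.1|, p.2.2) * φ p)
        = ∫ w : ℝ × ℝ, ∫ t : ℝ, d1 (d1 u) (t, |w.1|, w.2) * φ (t, w.1, w.2) :=
      integral_prod_symm _ iG1
    have e2 : ∀ w : ℝ × ℝ, (∫ t : ℝ, u (t, |w.1|, w.2) * d1 (d1 φ) (t, w.1, w.2))
        = ∫ t : ℝ, d1 (d1 u) (t, |w.1|, w.2) * φ (t, w.1, w.2) := by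
      intro w
      exact ibp2_smooth (sect1 hu' |w.1| w.2) (sect1 hφ' w.1 w.2)
        (hcs_comp hφc (j := fun s => (s, w.1, w.2)) (l := Prod.fst)
          continuous_fst (fun _ => rfl))
    rw [e1, e3]
    exact congrArg (integral volume) (funext e2)
  -- Claim 2 : the x-direction (even reflection)
  have claim2 : (∫ p : ℝ × ℝ × ℝ, u (p.1, |p.2.1|, p.2.2) * d2 (d2 φ) p)
      = ∫ p : ℝ × ℝ × ℝ, d2 (d2 u) (p.1, |p.2.1|, p.2.2) * φ p := by
    have hFcs : HasCompactSupport
        (fun p : ℝ × ℝ × ℝ => u (p.1, |p.2.1|, p.2.2) * d2 (d2 φ) p) := hB.mul_left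
    have hGcs : HasCompactSupport
        (fun p : ℝ × ℝ × ℝ => d2 (d2 u) (p.1, |p.2.1|, p.2.2) * φ p) := hφc.mul_left
    have sF : ∀ t : ℝ, Integrable
        (fun w : ℝ × ℝ => u (t, |w.1|, w.2) * d2 (d2 φ) (t, w.1, w.2)) := by
      intro t
      exact ((cv.mul cB).comp (continuous_const.prodMk continuous_id)).integrable_of_hasCompactSupport
        (hcs_comp hFcs (j := fun w : ℝ × ℝ => (t, w)) (l := Prod.snd)
          continuous_snd (fun _ => rfl))
    have sG : ∀ t : ℝ, Integrable
        (fun w : ℝ × ℝ => d2 (d2 u) (t, |w.1|, w.2) * φ (t, w.1, w.2)) := by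
      intro t
      exact ((cW2.mul hφ.continuous).comp
        (continuous_const.prodMk continuous_id)).integrable_of_hasCompactSupport
        (hcs_comp hGcs (j := fun w : ℝ × ℝ => (t, w)) (l := Prod.snd)
          continuous_snd (fun _ => rfl))
    have e3 : ∀ t y : ℝ, (∫ x : ℝ, u (t, |x|, y) * d2 (d2 φ) (t, x, y))
        = ∫ x : ℝ, d2 (d2 u) (t, |x|, y) * φ (t, x, y) := by
      intro t y
      exact ibp2_even (sect2 hu' t y) (hbc t y) (sect2 hφ' t y)
        (hcs_comp hφc (j := fun s => (t, s, y)) (l := fun p => p.2.1)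
          (continuous_fst.comp continuous_snd) (fun _ => rfl))
    calc (∫ p : ℝ × ℝ × ℝ, u (p.1, |p.2.1|, p.2.2) * d2 (d2 φ) p)
        = ∫ t : ℝ, ∫ w : ℝ × ℝ, u (t, |w.1|, w.2) * d2 (d2 φ) (t, w.1, w.2) :=
          integral_prod _ iF2
      _ = ∫ t : ℝ, ∫ y : ℝ, ∫ x : ℝ, u (t, |x|, y) * d2 (d2 φ) (t, x, y) :=
          congrArg (integral volume) (funext fun t => integral_prod_symm _ (sF t))
      _ = ∫ t : ℝ, ∫ y : ℝ, ∫ x : ℝ, d2 (d2 u) (t, |x|, y) * φ (t, x, y) :=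
          congrArg (integral volume) (funext fun t =>
            congrArg (integral volume) (funext fun y => e3 t y))
      _ = ∫ t : ℝ, ∫ w : ℝ × ℝ, d2 (d2 u) (t, |w.1|, w.2) * φ (t, w.1, w.2) :=
          (congrArg (integral volume) (funext fun t => integral_prod_symm _ (sG t))).symm
      _ = ∫ p : ℝ × ℝ × ℝ, d2 (d2 u) (p.1, |p.2.1|, p.2.2) * φ p :=
          (integral_prod _ iG2).symm
  -- Claim 3 : the y-direction
  have claim3 : (∫ p : ℝ × ℝ × ℝ, u (p.1, |p.2.1|, p.2.2) * d3 (d3 φ) p)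
      = ∫ p : ℝ × ℝ × ℝ, d3 (d3 u) (p.1, |p.2.1|, p.2.2) * φ p := by
    have hFcs : HasCompactSupport
        (fun p : ℝ × ℝ × ℝ => u (p.1, |p.2.1|, p.2.2) * d3 (d3 φ) p) := hC.mul_left
    have hGcs : HasCompactSupport
        (fun p : ℝ × ℝ × ℝ => d3 (d3 u) (p.1, |p.2.1|, p.2.2) * φ p) := hφc.mul_left
    have sF : ∀ t : ℝ, Integrable
        (fun w : ℝ × ℝ => u (t, |w.1|, w.2) * d3 (d3 φ) (t, w.1, w.2)) := by
      intro t
      exact ((cv.mul cC).comp (continuous_const.prodMk continuous_id)).integrable_of_hasCompactSupport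
        (hcs_comp hFcs (j := fun w : ℝ × ℝ => (t, w)) (l := Prod.snd)
          continuous_snd (fun _ => rfl))
    have sG : ∀ t : ℝ, Integrable
        (fun w : ℝ × ℝ => d3 (d3 u) (t, |w.1|, w.2) * φ (t, w.1, w.2)) := by
      intro t
      exact ((cW3.mul hφ.continuous).comp
        (continuous_const.prodMk continuous_id)).integrable_of_hasCompactSupport
        (hcs_comp hGcs (j := fun w : ℝ × ℝ => (t, w)) (l := Prod.snd)
          continuous_snd (fun _ => rfl))
    have e3 : ∀ t x : ℝ, (∫ y : ℝ, u (t, |x|, y) * d3 (d3 φ) (t, x, y))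
        = ∫ y : ℝ, d3 (d3 u) (t, |x|, y) * φ (t, x, y) := by
      intro t x
      exact ibp2_smooth (sect3 hu' t |x|) (sect3 hφ' t x)
        (hcs_comp hφc (j := fun s => (t, x, s)) (l := fun p => p.2.2)
          (continuous_snd.comp continuous_snd) (fun _ => rfl))
    calc (∫ p : ℝ × ℝ × ℝ, u (p.1, |p.2.1|, p.2.2) * d3 (d3 φ) p)
        = ∫ t : ℝ, ∫ w : ℝ × ℝ, u (t, |w.1|, w.2) * d3 (d3 φ) (t, w.1, w.2) :=
          integral_prod _ iF3
      _ = ∫ t : ℝ, ∫ x : ℝ, ∫ y : ℝ, u (t, |x|, y) * d3 (d3 φ) (t, x, y) :=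
          congrArg (integral volume) (funext fun t => integral_prod _ (sF t))
      _ = ∫ t : ℝ, ∫ x : ℝ, ∫ y : ℝ, d3 (d3 u) (t, |x|, y) * φ (t, x, y) :=
          congrArg (integral volume) (funext fun t =>
            congrArg (integral volume) (funext fun x => e3 t x))
      _ = ∫ t : ℝ, ∫ w : ℝ × ℝ, d3 (d3 u) (t, |w.1|, w.2) * φ (t, w.1, w.2) :=
          (congrArg (integral volume) (funext fun t => integral_prod _ (sG t))).symm
      _ = ∫ p : ℝ × ℝ × ℝ, d3 (d3 u) (p.1, |p.2.1|, p.2.2) * φ p :=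
          (integral_prod _ iG3).symm
  -- final assembly
  calc (∫ p : ℝ × ℝ × ℝ, u (p.1, |p.2.1|, p.2.2) *
          (d1 (d1 φ) p - d2 (d2 φ) p - d3 (d3 φ) p))
      = ∫ p : ℝ × ℝ × ℝ, (u (p.1, |p.2.1|, p.2.2) * d1 (d1 φ) p
          - u (p.1, |p.2.1|, p.2.2) * d2 (d2 φ) p
          - u (p.1, |p.2.1|, p.2.2) * d3 (d3 φ) p) := by
        congr 1
        funext p
        ring
    _ = (∫ p : ℝ × ℝ × ℝ, (u (p.1, |p.2.1|, p.2.2) * d1 (d1 φ) p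
          - u (p.1, |p.2.1|, p.2.2) * d2 (d2 φ) p))
        - ∫ p : ℝ × ℝ × ℝ, u (p.1, |p.2.1|, p.2.2) * d3 (d3 φ) p :=
          integral_sub (iF1.sub iF2) iF3
    _ = (∫ p : ℝ × ℝ × ℝ, u (p.1, |p.2.1|, p.2.2) * d1 (d1 φ) p)
        - (∫ p : ℝ × ℝ × ℝ, u (p.1, |p.2.1|, p.2.2) * d2 (d2 φ) p)
        - ∫ p : ℝ × ℝ × ℝ, u (p.1, |p.2.1|, p.2.2) * d3 (d3 φ) p := by
          rw [integral_sub iF1 iF2]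
    _ = (∫ p : ℝ × ℝ × ℝ, d1 (d1 u) (p.1, |p.2.1|, p.2.2) * φ p)
        - (∫ p : ℝ × ℝ × ℝ, d2 (d2 u) (p.1, |p.2.1|, p.2.2) * φ p)
        - ∫ p : ℝ × ℝ × ℝ, d3 (d3 u) (p.1, |p.2.1|, p.2.2) * φ p := by
          rw [claim1, claim2, claim3]
    _ = ∫ p : ℝ × ℝ × ℝ, (d1 (d1 u) (p.1, |p.2.1|, p.2.2) * φ p
          - d2 (d2 u) (p.1, |p.2.1|, p.2.2) * φ p
          - d3 (d3 u) (p.1, |p.2.1|, p.2.2) * φ p) := by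
          have h12 : (∫ p : ℝ × ℝ × ℝ, (d1 (d1 u) (p.1, |p.2.1|, p.2.2) * φ p
              - d2 (d2 u) (p.1, |p.2.1|, p.2.2) * φ p))
              = (∫ p : ℝ × ℝ × ℝ, d1 (d1 u) (p.1, |p.2.1|, p.2.2) * φ p)
                - ∫ p : ℝ × ℝ × ℝ, d2 (d2 u) (p.1, |p.2.1|, p.2.2) * φ p :=
            integral_sub iG1 iG2
          have h123 : (∫ p : ℝ × ℝ × ℝ, (d1 (d1 u) (p.1, |p.2.1|, p.2.2) * φ p
              - d2 (d2 u) (p.1, |p.2.1|, p.2.2) * φ p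
              - d3 (d3 u) (p.1, |p.2.1|, p.2.2) * φ p))
              = (∫ p : ℝ × ℝ × ℝ, (d1 (d1 u) (p.1, |p.2.1|, p.2.2) * φ p
                - d2 (d2 u) (p.1, |p.2.1|, p.2.2) * φ p))
                - ∫ p : ℝ × ℝ × ℝ, d3 (d3 u) (p.1, |p.2.1|, p.2.2) * φ p :=
            integral_sub (iG1.sub iG2) iG3
          rw [h123, h12]
    _ = ∫ _p : ℝ × ℝ × ℝ, (0 : ℝ) := by
        congr 1
        funext p
        linear_combination (φ p) * hwave p.1 |p.2.1| p.2.2 (abs_nonneg _)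
    _ = 0 := integral_zero _ _
end

section
/- Let Ω ⊆ ℝ² be a nonempty bounded open set whose closure does not contain the origin (0,0). Then there is no function v : ℝ² → ℝ that is C^∞ on ℝ², satisfies Laplace's equation ∂²v/∂x² + ∂²v/∂y² = 0 at every point of ℝ², and satisfies v(x,y) = log(x² + y²) for every point (x,y) in the topological frontier of Ω. -/
open scoped ContDiff
open Set Filter Topology

/-- Partial derivative in the first variable. -/
noncomputable def dX (v : ℝ × ℝ → ℝ) : ℝ × ℝ → ℝ :=
  fun p => deriv (fun s => v (s, p.2)) p.1

/-- Partial derivative in the second variable. -/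
noncomputable def dY (v : ℝ × ℝ → ℝ) : ℝ × ℝ → ℝ :=
  fun p => deriv (fun s => v (p.1, s)) p.2

lemma second_deriv_nonpos_of_isLocalMax {f : ℝ → ℝ} {a : ℝ} {S : Set ℝ}
    (hS : IsOpen S) (haS : a ∈ S) (hf : ContDiffOn ℝ ∞ f S) (hmax : IsLocalMax f a) :
    deriv (deriv f) a ≤ 0 := by
  by_contra hlt
  push_neg at hlt
  have hf' : ContDiffOn ℝ ∞ (deriv f) S :=
    ((contDiffOn_infty_iff_deriv_of_isOpen hS).1 hf).2
  have hf'' : ContinuousOn (deriv (deriv f)) S :=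
    ((contDiffOn_infty_iff_deriv_of_isOpen hS).1 hf').2.continuousOn
  have hev : ∀ᶠ x in 𝓝 a, x ∈ S ∧ 0 < deriv (deriv f) x := by
    have h1 : ∀ᶠ x in 𝓝 a, x ∈ S := hS.mem_nhds haS
    have h2 : ContinuousAt (deriv (deriv f)) a := hf''.continuousAt (hS.mem_nhds haS)
    filter_upwards [h1, continuousAt_const.eventually_lt h2 hlt] with x hx hx' using ⟨hx, hx'⟩
  obtain ⟨δ, hδpos, hball⟩ := Metric.eventually_nhds_iff_ball.1 hev
  have hballS : Metric.ball a δ ⊆ S := fun x hx => (hball x hx).1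
  -- deriv f is strictly monotone on the ball
  have hmono : StrictMonoOn (deriv f) (Metric.ball a δ) := by
    apply strictMonoOn_of_deriv_pos (convex_ball a δ)
    · exact (hf'.continuousOn).mono hballS
    · intro x hx
      rw [Metric.isOpen_ball.interior_eq] at hx
      exact (hball x hx).2
  have hda : deriv f a = 0 := hmax.deriv_eq_zero
  -- f is strictly increasing just to the right of a
  set t := a + δ / 2 with ht
  have htball : ∀ x ∈ Ioc a t, x ∈ Metric.ball a δ := by
    intro x hx
    rw [Real.ball_eq_Ioo]
    have h1 := hx.1
    have h2 := hx.2
    rw [ht] at h2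
    constructor
    · linarith
    · linarith
  have hIcc : Icc a t ⊆ Metric.ball a δ := by
    intro x hx
    rcases eq_or_lt_of_le hx.1 with h | h
    · rw [← h]; exact Metric.mem_ball_self hδpos
    · exact htball x ⟨h, hx.2⟩
  have hfmono : StrictMonoOn f (Icc a t) := by
    apply strictMonoOn_of_deriv_pos (convex_Icc a t)
    · exact hf.continuousOn.mono (hIcc.trans hballS)
    · intro x hx
      rw [interior_Icc] at hx
      have hxb : x ∈ Metric.ball a δ := htball x ⟨hx.1, le_of_lt hx.2⟩
      have := hmono (Metric.mem_ball_self hδpos) hxb hx.1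
      rw [hda] at this
      exact this
  have hta : a < t := by simp [ht]; linarith
  have hfa : f a < f t := hfmono (left_mem_Icc.2 hta.le) (right_mem_Icc.2 hta.le) hta
  -- contradict the local max
  have hfreq : ∀ᶠ x in 𝓝[>] a, f x ≤ f a := (hmax.filter_mono nhdsWithin_le_nhds)
  have hIoc : Ioc a t ∈ 𝓝[>] a := Ioc_mem_nhdsGT_of_mem ⟨le_refl a, hta⟩
  obtain ⟨x, hx1, hx2⟩ := (hfreq.and (eventually_of_mem hIoc (fun x hx => hx))).exists
  have : f a < f x := hfmono (left_mem_Icc.2 hta.le) ⟨hx2.1.le, hx2.2⟩ hx2.1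
  linarith

lemma max_principle_le {Ω U : Set (ℝ × ℝ)} (hbd : Bornology.IsBounded Ω) (hop : IsOpen Ω)
    (hU : IsOpen U) (hcl : closure Ω ⊆ U) {u : ℝ × ℝ → ℝ}
    (hu : ∀ p ∈ U, ContDiffAt ℝ ∞ u p)
    (hlap : ∀ p ∈ Ω, dX (dX u) p + dY (dY u) p = 0)
    (hfr : ∀ p ∈ frontier Ω, u p ≤ 0) :
    ∀ p ∈ Ω, u p ≤ 0 := by
  by_contra hcon
  push_neg at hcon
  obtain ⟨p0, hp0, hup0⟩ := hcon
  have hKcomp : IsCompact (closure Ω) := hbd.isCompact_closure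
  have hKne : (closure Ω).Nonempty := ⟨p0, subset_closure hp0⟩
  obtain ⟨N, hN⟩ : ∃ N : ℝ × ℝ → ℝ, N = fun p => p.1 ^ 2 + p.2 ^ 2 := ⟨_, rfl⟩
  have hNcont : Continuous N := by rw [hN]; fun_prop
  have hNnonneg : ∀ p, 0 ≤ N p := fun p => by rw [hN]; positivity
  have hNs : ContDiff ℝ ∞ N := by
    rw [hN]; exact (contDiff_fst.pow 2).add (contDiff_snd.pow 2)
  obtain ⟨C, hC0, hCb⟩ : ∃ C : ℝ, 0 ≤ C ∧ ∀ p ∈ closure Ω, N p ≤ C := by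
    obtain ⟨pc, hpc, hpcmax⟩ := hKcomp.exists_isMaxOn hKne hNcont.continuousOn
    exact ⟨N pc, hNnonneg pc, fun p hp => hpcmax hp⟩
  obtain ⟨ε, hεpos, h4⟩ : ∃ ε : ℝ, 0 < ε ∧ ε * (C + 1) = u p0 / 2 := by
    refine ⟨u p0 / (2 * (C + 1)), by positivity, ?_⟩
    field_simp
  obtain ⟨w, hw⟩ : ∃ w : ℝ × ℝ → ℝ, w = fun p => u p + ε * N p := ⟨_, rfl⟩
  have hweq : ∀ p, w p = u p + ε * N p := fun p => by rw [hw]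
  have hws : ∀ p ∈ U, ContDiffAt ℝ ∞ w p := by
    intro p hp
    rw [hw]
    exact (hu p hp).add ((hNs.contDiffAt).const_smul ε)
  have hwc : ContinuousOn w (closure Ω) :=
    fun p hp => ((hws p (hcl hp)).continuousAt).continuousWithinAt
  obtain ⟨q, hqK, hqmax⟩ := hKcomp.exists_isMaxOn hKne hwc
  -- frontier values of w are < w p0
  have hfrlt : ∀ r ∈ frontier Ω, w r < w p0 := by
    intro r hr
    have hrK : r ∈ closure Ω := frontier_subset_closure hr
    have h2 := hfr r hr
    have h3 : N r ≤ C := hCb r hrK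
    have h6 : 0 ≤ N r := hNnonneg r
    have e1 := hweq r
    have e2 := hweq p0
    have h9 := hNnonneg p0
    have h7 : ε * N r ≤ ε * (C + 1) := by nlinarith
    have h10 : 0 ≤ ε * N p0 := by positivity
    linarith
  -- q is in Ω
  have hqΩ : q ∈ Ω := by
    have hqnf : q ∉ frontier Ω := by
      intro hqf
      have h1 := hfrlt q hqf
      have h2 : w p0 ≤ w q := hqmax (subset_closure hp0)
      linarith
    have : q ∈ interior Ω := by
      have hqK2 : q ∈ interior Ω ∪ frontier Ω := by
        rw [← closure_eq_interior_union_frontier]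
        exact hqK
      rcases hqK2 with h | h
      · exact h
      · exact absurd h hqnf
    rwa [hop.interior_eq] at this
  -- q is a local max of w
  have hlocmax : IsLocalMax w q := by
    filter_upwards [hop.mem_nhds hqΩ] with x hx
    exact hqmax (subset_closure hx)
  -- main slice computation
  have key : ∀ (f uslice : ℝ → ℝ) (c a : ℝ) (S : Set ℝ), IsOpen S → a ∈ S →
      (∀ s, f s = uslice s + ε * (s ^ 2 + c ^ 2)) →
      (∀ s ∈ S, ContDiffAt ℝ ∞ uslice s) → IsLocalMax f a →
      deriv (deriv f) a ≤ 0 ∧ deriv (deriv f) a = deriv (deriv uslice) a + ε * 2 := by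
    intro f uslice c a S hS haS hfeq husl hmax
    have hfS : ContDiffOn ℝ ∞ f S := by
      intro s hs
      have h1 : ContDiffAt ℝ ∞ (fun s => uslice s + ε * (s ^ 2 + c ^ 2)) s :=
        (husl s hs).add (by fun_prop)
      exact (h1.congr_of_eventuallyEq (Eventually.of_forall (fun x => hfeq x))).contDiffWithinAt
    have huS : ContDiffOn ℝ ∞ uslice S := fun s hs => (husl s hs).contDiffWithinAt
    refine ⟨second_deriv_nonpos_of_isLocalMax hS haS hfS hmax, ?_⟩
    have hd1 : ∀ s ∈ S, deriv f s = deriv uslice s + ε * (2 * s) := by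
      intro s hs
      have hus : HasDerivAt uslice (deriv uslice s) s :=
        ((husl s hs).differentiableAt (by norm_num)).hasDerivAt
      have hpoly : HasDerivAt (fun x : ℝ => ε * (x ^ 2 + c ^ 2)) (ε * (2 * s)) s := by
        have := ((hasDerivAt_pow 2 s).add_const (c ^ 2)).const_mul ε
        norm_num at this
        simpa using this
      have := (hus.add hpoly).deriv
      rw [show (uslice + fun x => ε * (x ^ 2 + c ^ 2)) = f from (funext fun x => (hfeq x).symm)] at this
      exact this
    have hd2 : deriv f =ᶠ[𝓝 a] fun s => deriv uslice s + ε * (2 * s) := by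
      filter_upwards [hS.mem_nhds haS] with s hs using hd1 s hs
    rw [hd2.deriv_eq]
    have hdu : DifferentiableAt ℝ (deriv uslice) a := by
      have h10 := ((contDiffOn_infty_iff_deriv_of_isOpen hS).1 huS).2
      have h11 := ((contDiffOn_infty_iff_deriv_of_isOpen hS).1 h10).1
      exact (h11.differentiableAt (hS.mem_nhds haS))
    have hpoly2 : HasDerivAt (fun s : ℝ => ε * (2 * s)) (ε * 2) a := by
      have h12 : (fun s : ℝ => ε * (2 * s)) = fun s : ℝ => s * (ε * 2) := by
        funext s; ring
      rw [h12]
      simpa using (hasDerivAt_id a).mul_const (ε * 2)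
    exact (hdu.hasDerivAt.add hpoly2).deriv
  -- apply in both directions
  have hSx : IsOpen {s : ℝ | (s, q.2) ∈ U} := hU.preimage (by fun_prop)
  have hSy : IsOpen {t : ℝ | (q.1, t) ∈ U} := hU.preimage (by fun_prop)
  have hqU : q ∈ U := hcl (subset_closure hqΩ)
  have hmaxx : IsLocalMax (fun s => w (s, q.2)) q.1 := by
    have hcont : ContinuousAt (fun s : ℝ => (s, q.2)) q.1 := by fun_prop
    exact hcont.tendsto.eventually hlocmax
  have hmaxy : IsLocalMax (fun t => w (q.1, t)) q.2 := by
    have hcont : ContinuousAt (fun t : ℝ => (q.1, t)) q.2 := by fun_prop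
    exact hcont.tendsto.eventually hlocmax
  have hux : ∀ s ∈ {s : ℝ | (s, q.2) ∈ U}, ContDiffAt ℝ ∞ (fun s => u (s, q.2)) s :=
    fun s hs => (hu _ hs).comp s (by fun_prop)
  have huy : ∀ t ∈ {t : ℝ | (q.1, t) ∈ U}, ContDiffAt ℝ ∞ (fun t => u (q.1, t)) t :=
    fun t ht => (hu _ ht).comp t (by fun_prop)
  obtain ⟨hx1, hx2⟩ := key (fun s => w (s, q.2)) (fun s => u (s, q.2)) q.2 q.1 _ hSx hqU
    (fun s => by show w (s, q.2) = u (s, q.2) + ε * (s ^ 2 + q.2 ^ 2); rw [hweq (s, q.2), hN]) hux hmaxx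
  obtain ⟨hy1, hy2⟩ := key (fun t => w (q.1, t)) (fun t => u (q.1, t)) q.1 q.2 _ hSy hqU
    (fun t => by show w (q.1, t) = u (q.1, t) + ε * (t ^ 2 + q.1 ^ 2); rw [hweq (q.1, t), hN]; ring) huy hmaxy
  have exu : dX (dX u) q = deriv (deriv (fun s => u (s, q.2))) q.1 := rfl
  have eyu : dY (dY u) q = deriv (deriv (fun t => u (q.1, t))) q.2 := rfl
  have hlapq := hlap q hqΩ
  rw [exu, eyu] at hlapq
  rw [hx2] at hx1
  rw [hy2] at hy1
  linarith

lemma analyticAt_real_log {x : ℝ} (hx : 0 < x) : AnalyticAt ℝ Real.log x := by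
  have h1 : AnalyticAt ℂ Complex.log (Complex.ofRealCLM x) := by
    apply analyticAt_clog
    rw [Complex.mem_slitPlane_iff]
    left
    simpa using hx
  have h2 : AnalyticAt ℝ Complex.log (Complex.ofRealCLM x) := h1.restrictScalars
  have h3 : AnalyticAt ℝ (fun y : ℝ => Complex.log (Complex.ofRealCLM y)) x :=
    h2.comp (Complex.ofRealCLM.analyticAt x)
  have h4 : AnalyticAt ℝ (fun y : ℝ => Complex.reCLM (Complex.log (Complex.ofRealCLM y))) x :=
    (Complex.reCLM.analyticAt _).comp h3
  have h5 : (fun y : ℝ => Complex.reCLM (Complex.log (Complex.ofRealCLM y))) = Real.log := by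
    funext y
    simp only [Complex.ofRealCLM_apply, Complex.reCLM_apply]
    exact Complex.log_ofReal_re y
  rwa [h5] at h4

lemma dX_neg (f : ℝ × ℝ → ℝ) : dX (fun p => -f p) = fun p => -(dX f p) := by
  funext p
  simp only [dX]
  exact deriv.neg

lemma dY_neg (f : ℝ × ℝ → ℝ) : dY (fun p => -f p) = fun p => -(dY f p) := by
  funext p
  simp only [dY]
  exact deriv.neg

lemma analyticAt_of_harmonic_dXdY {v : ℝ × ℝ → ℝ} (hv : ContDiff ℝ (⊤ : ℕ∞) v)
    (hlap : ∀ p : ℝ × ℝ, dX (dX v) p + dY (dY v) p = 0) (p : ℝ × ℝ) : AnalyticAt ℝ v p := by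
  have hvdiff : Differentiable ℝ v := hv.differentiable (by simp)
  have hfd : ContDiff ℝ ∞ (fderiv ℝ v) := hv.fderiv_right (by simp)
  have hfdd : Differentiable ℝ (fderiv ℝ v) := hfd.differentiable (by simp)
  have hxx : ∀ p : ℝ × ℝ, dX (dX v) p = fderiv ℝ (fderiv ℝ v) p ((1 : ℝ), (0 : ℝ)) ((1 : ℝ), (0 : ℝ)) := by
    intro p
    have hdX : dX v = fun q => fderiv ℝ v q ((1 : ℝ), (0 : ℝ)) := by
      funext q
      have h1 : HasDerivAt (fun s : ℝ => (s, q.2)) ((1 : ℝ), (0 : ℝ)) q.1 :=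
        (hasDerivAt_id q.1).prodMk (hasDerivAt_const q.1 q.2)
      exact ((hvdiff q).hasFDerivAt.comp_hasDerivAt q.1 h1).deriv
    rw [hdX]
    have h1 : HasDerivAt (fun s : ℝ => (s, p.2)) ((1 : ℝ), (0 : ℝ)) p.1 :=
      (hasDerivAt_id p.1).prodMk (hasDerivAt_const p.1 p.2)
    have h2 := (hfdd p).hasFDerivAt.comp_hasDerivAt p.1 h1
    have h3 := (ContinuousLinearMap.apply ℝ ℝ ((1 : ℝ), (0 : ℝ))).hasFDerivAt.comp_hasDerivAt p.1 h2
    exact h3.deriv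
  have hyy : ∀ p : ℝ × ℝ, dY (dY v) p = fderiv ℝ (fderiv ℝ v) p ((0 : ℝ), (1 : ℝ)) ((0 : ℝ), (1 : ℝ)) := by
    intro p
    have hdY : dY v = fun q => fderiv ℝ v q ((0 : ℝ), (1 : ℝ)) := by
      funext q
      have h1 : HasDerivAt (fun s : ℝ => (q.1, s)) ((0 : ℝ), (1 : ℝ)) q.2 :=
        (hasDerivAt_const q.2 q.1).prodMk (hasDerivAt_id q.2)
      exact ((hvdiff q).hasFDerivAt.comp_hasDerivAt q.2 h1).deriv
    rw [hdY]
    have h1 : HasDerivAt (fun s : ℝ => (p.1, s)) ((0 : ℝ), (1 : ℝ)) p.2 :=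
      (hasDerivAt_const p.2 p.1).prodMk (hasDerivAt_id p.2)
    have h2 := (hfdd p).hasFDerivAt.comp_hasDerivAt p.2 h1
    have h3 := (ContinuousLinearMap.apply ℝ ℝ ((0 : ℝ), (1 : ℝ))).hasFDerivAt.comp_hasDerivAt p.2 h2
    exact h3.deriv
  set g : ℂ → ℝ := v ∘ Complex.equivRealProdCLM with hg
  have hgh : ∀ z, InnerProductSpace.HarmonicAt g z := by
    intro z
    have h2 : (2 : WithTop ℕ∞) ≤ ((⊤ : ℕ∞) : WithTop ℕ∞) := WithTop.coe_le_coe.2 le_top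
    refine ⟨(hv.comp Complex.equivRealProdCLM.contDiff).contDiffAt.of_le h2, ?_⟩
    refine Eventually.of_forall fun w => ?_
    rw [InnerProductSpace.laplacian_eq_iteratedFDeriv_complexPlane]
    show iteratedFDeriv ℝ 2 (v ∘ (Complex.equivRealProdCLM : ℂ →L[ℝ] ℝ × ℝ)) w ![1, 1]
      + iteratedFDeriv ℝ 2 (v ∘ (Complex.equivRealProdCLM : ℂ →L[ℝ] ℝ × ℝ)) w
        ![Complex.I, Complex.I] = (0 : ℂ → ℝ) w
    rw [ContinuousLinearMap.iteratedFDeriv_comp_right _ hv w h2]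
    simp only [ContinuousMultilinearMap.compContinuousLinearMap_apply, iteratedFDeriv_two_apply]
    have := hlap (Complex.equivRealProdCLM w)
    rw [hxx, hyy] at this
    simpa using this
  have hs : AnalyticAt ℝ (fun q : ℝ × ℝ => Complex.equivRealProdCLM.symm q) p :=
    (Complex.equivRealProdCLM.symm : ℝ × ℝ →L[ℝ] ℂ).analyticAt p
  have h := (HarmonicAt.analyticAt (hgh (Complex.equivRealProdCLM.symm p))).comp hs
  convert h using 1
  funext q
  simp [hg]

/-- For a nonempty bounded open set `Ω ⊆ ℝ²` whose closure avoids the origin, there is no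
globally harmonic `C^∞` function on `ℝ²` equal to `log(x² + y²)` on the frontier of `Ω`. -/
theorem no_global_harmonic_extension_of_log
    (Ω : Set (ℝ × ℝ)) (hne : Ω.Nonempty) (hbd : Bornology.IsBounded Ω) (hop : IsOpen Ω)
    (h0 : ((0 : ℝ), (0 : ℝ)) ∉ closure Ω) :
    ¬ ∃ v : ℝ × ℝ → ℝ, ContDiff ℝ (⊤ : ℕ∞) v ∧
      (∀ p : ℝ × ℝ, dX (dX v) p + dY (dY v) p = 0) ∧
      (∀ p ∈ frontier Ω, v p = Real.log (p.1 ^ 2 + p.2 ^ 2)) := by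
  rintro ⟨v, hv, hlap, hbdry⟩
  set U : Set (ℝ × ℝ) := {((0 : ℝ), (0 : ℝ))}ᶜ with hUdef
  have hUo : IsOpen U := isOpen_compl_singleton
  have hclU : closure Ω ⊆ U := by
    intro p hp h
    rw [mem_singleton_iff] at h
    exact h0 (h ▸ hp)
  have hpos : ∀ p : ℝ × ℝ, p ∈ U → 0 < p.1 ^ 2 + p.2 ^ 2 := by
    intro p hp
    have hne' : p ≠ ((0 : ℝ), (0 : ℝ)) := hp
    rcases eq_or_ne p.1 0 with h1 | h1
    · rcases eq_or_ne p.2 0 with h2 | h2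
      · exact absurd (Prod.ext h1 h2) hne'
      · positivity
    · positivity
  set L : ℝ × ℝ → ℝ := fun p => Real.log (p.1 ^ 2 + p.2 ^ 2) with hLdef
  -- L is analytic on U
  have hLa : ∀ p ∈ U, AnalyticAt ℝ L p := by
    intro p hp
    have hNa : AnalyticAt ℝ (fun q : ℝ × ℝ => q.1 ^ 2 + q.2 ^ 2) p := by
      have : ContDiff ℝ ω (fun q : ℝ × ℝ => q.1 ^ 2 + q.2 ^ 2) :=
        (contDiff_fst.pow 2).add (contDiff_snd.pow 2)
      exact this.analyticOnNhd (s := univ) p (mem_univ p)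
    have h6 : AnalyticAt ℝ (Real.log ∘ fun q : ℝ × ℝ => q.1 ^ 2 + q.2 ^ 2) p :=
      AnalyticAt.comp (f := fun q : ℝ × ℝ => q.1 ^ 2 + q.2 ^ 2)
        (analyticAt_real_log (hpos p hp)) hNa
    exact h6
  -- basic differentiability facts
  have hvdiff : Differentiable ℝ v := hv.differentiable (by simp)
  have hdXv_eq : ∀ p : ℝ × ℝ, dX v p = fderiv ℝ v p (1, 0) := by
    intro p
    have h1 : HasDerivAt (fun s : ℝ => (s, p.2)) ((1 : ℝ), (0 : ℝ)) p.1 :=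
      (hasDerivAt_id p.1).prodMk (hasDerivAt_const p.1 p.2)
    exact ((hvdiff p).hasFDerivAt.comp_hasDerivAt p.1 h1).deriv
  have hdYv_eq : ∀ p : ℝ × ℝ, dY v p = fderiv ℝ v p (0, 1) := by
    intro p
    have h1 : HasDerivAt (fun s : ℝ => (p.1, s)) ((0 : ℝ), (1 : ℝ)) p.2 :=
      (hasDerivAt_const p.2 p.1).prodMk (hasDerivAt_id p.2)
    exact ((hvdiff p).hasFDerivAt.comp_hasDerivAt p.2 h1).deriv
  have hfd : ContDiff ℝ ∞ (fderiv ℝ v) := hv.fderiv_right (by simp)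
  have hdXv : ContDiff ℝ ∞ (dX v) := by
    have h1 : ContDiff ℝ ∞ (fun p : ℝ × ℝ => fderiv ℝ v p ((1 : ℝ), (0 : ℝ))) :=
      hfd.clm_apply contDiff_const
    rwa [show (fun p : ℝ × ℝ => fderiv ℝ v p ((1 : ℝ), (0 : ℝ))) = dX v from
      (funext fun p => (hdXv_eq p).symm)] at h1
  have hdYv : ContDiff ℝ ∞ (dY v) := by
    have h1 : ContDiff ℝ ∞ (fun p : ℝ × ℝ => fderiv ℝ v p ((0 : ℝ), (1 : ℝ))) :=
      hfd.clm_apply contDiff_const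
    rwa [show (fun p : ℝ × ℝ => fderiv ℝ v p ((0 : ℝ), (1 : ℝ))) = dY v from
      (funext fun p => (hdYv_eq p).symm)] at h1
  -- the difference u = v - L, smooth on U
  have hu : ∀ p ∈ U, ContDiffAt ℝ ∞ (fun p => v p - L p) p := by
    intro p hp
    exact ((hv.contDiffAt).of_le (by simp)).sub (((hLa p hp).contDiffAt).of_le le_top)
  -- Laplacian of u vanishes on U
  have hΔu : ∀ p ∈ U, dX (dX (fun p => v p - L p)) p + dY (dY (fun p => v p - L p)) p = 0 := by
    intro p hp
    have hpne := (hpos p hp).ne'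
    -- x direction
    have hSxo : IsOpen {s : ℝ | (s, p.2) ∈ U} := hUo.preimage (by fun_prop)
    have hpSx : p.1 ∈ {s : ℝ | (s, p.2) ∈ U} := hp
    have hux1 : ∀ s ∈ {s : ℝ | (s, p.2) ∈ U},
        deriv (fun s' => v (s', p.2) - L (s', p.2)) s
          = dX v (s, p.2) - 2 * s / (s ^ 2 + p.2 ^ 2) := by
      intro s hs
      have hsne : s ^ 2 + p.2 ^ 2 ≠ 0 := (hpos (s, p.2) hs).ne'
      have hv1 : HasDerivAt (fun s' => v (s', p.2)) (dX v (s, p.2)) s := by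
        rw [hdXv_eq]
        exact (hvdiff _).hasFDerivAt.comp_hasDerivAt s
          ((hasDerivAt_id s).prodMk (hasDerivAt_const s p.2))
      have hL0 : HasDerivAt (fun s' : ℝ => s' ^ 2 + p.2 ^ 2) (2 * s) s := by
        simpa using (hasDerivAt_pow 2 s).add_const (p.2 ^ 2)
      have hL1 : HasDerivAt (fun s' : ℝ => Real.log (s' ^ 2 + p.2 ^ 2))
          (2 * s / (s ^ 2 + p.2 ^ 2)) s := hL0.log hsne
      exact (hv1.sub hL1).deriv
    have hevx : deriv (fun s' => v (s', p.2) - L (s', p.2))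
        =ᶠ[𝓝 p.1] fun s => dX v (s, p.2) - 2 * s / (s ^ 2 + p.2 ^ 2) := by
      filter_upwards [hSxo.mem_nhds hpSx] with s hs using hux1 s hs
    have hdXvslice : HasDerivAt (fun s => dX v (s, p.2)) (dX (dX v) p) p.1 := by
      have h2 : DifferentiableAt ℝ (fun s : ℝ => dX v (s, p.2)) p.1 :=
        ((hdXv.differentiable (by simp)) _).comp p.1
          ((differentiableAt_id).prodMk (differentiableAt_const _))
      exact h2.hasDerivAt
    have hq : HasDerivAt (fun s : ℝ => 2 * s / (s ^ 2 + p.2 ^ 2))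
        ((2 * (p.1 ^ 2 + p.2 ^ 2) - 2 * p.1 * (2 * p.1)) / (p.1 ^ 2 + p.2 ^ 2) ^ 2) p.1 := by
      have hc : HasDerivAt (fun s : ℝ => 2 * s) 2 p.1 := by
        simpa using (hasDerivAt_id p.1).const_mul (2 : ℝ)
      have hd : HasDerivAt (fun s : ℝ => s ^ 2 + p.2 ^ 2) (2 * p.1) p.1 := by
        simpa using (hasDerivAt_pow 2 p.1).add_const (p.2 ^ 2)
      exact hc.div hd hpne
    have ex : dX (dX (fun p => v p - L p)) p
        = dX (dX v) p - (2 * (p.1 ^ 2 + p.2 ^ 2) - 2 * p.1 * (2 * p.1)) / (p.1 ^ 2 + p.2 ^ 2) ^ 2 := by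
      show deriv (deriv (fun s' => v (s', p.2) - L (s', p.2))) p.1 = _
      rw [hevx.deriv_eq]
      exact (hdXvslice.sub hq).deriv
    -- y direction
    have hSyo : IsOpen {t : ℝ | (p.1, t) ∈ U} := hUo.preimage (by fun_prop)
    have hpSy : p.2 ∈ {t : ℝ | (p.1, t) ∈ U} := hp
    have huy1 : ∀ t ∈ {t : ℝ | (p.1, t) ∈ U},
        deriv (fun t' => v (p.1, t') - L (p.1, t')) t
          = dY v (p.1, t) - 2 * t / (p.1 ^ 2 + t ^ 2) := by
      intro t ht
      have htne : p.1 ^ 2 + t ^ 2 ≠ 0 := (hpos (p.1, t) ht).ne'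
      have hv1 : HasDerivAt (fun t' => v (p.1, t')) (dY v (p.1, t)) t := by
        rw [hdYv_eq]
        exact (hvdiff _).hasFDerivAt.comp_hasDerivAt t
          ((hasDerivAt_const t p.1).prodMk (hasDerivAt_id t))
      have hL0 : HasDerivAt (fun t' : ℝ => p.1 ^ 2 + t' ^ 2) (2 * t) t := by
        simpa using (hasDerivAt_pow 2 t).const_add (p.1 ^ 2)
      have hL1 : HasDerivAt (fun t' : ℝ => Real.log (p.1 ^ 2 + t' ^ 2))
          (2 * t / (p.1 ^ 2 + t ^ 2)) t := hL0.log htne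
      exact (hv1.sub hL1).deriv
    have hevy : deriv (fun t' => v (p.1, t') - L (p.1, t'))
        =ᶠ[𝓝 p.2] fun t => dY v (p.1, t) - 2 * t / (p.1 ^ 2 + t ^ 2) := by
      filter_upwards [hSyo.mem_nhds hpSy] with t ht using huy1 t ht
    have hdYvslice : HasDerivAt (fun t => dY v (p.1, t)) (dY (dY v) p) p.2 := by
      have h2 : DifferentiableAt ℝ (fun t : ℝ => dY v (p.1, t)) p.2 :=
        ((hdYv.differentiable (by simp)) _).comp p.2
          ((differentiableAt_const _).prodMk (differentiableAt_id))
      exact h2.hasDerivAt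
    have hqy : HasDerivAt (fun t : ℝ => 2 * t / (p.1 ^ 2 + t ^ 2))
        ((2 * (p.1 ^ 2 + p.2 ^ 2) - 2 * p.2 * (2 * p.2)) / (p.1 ^ 2 + p.2 ^ 2) ^ 2) p.2 := by
      have hc : HasDerivAt (fun t : ℝ => 2 * t) 2 p.2 := by
        simpa using (hasDerivAt_id p.2).const_mul (2 : ℝ)
      have hd : HasDerivAt (fun t : ℝ => p.1 ^ 2 + t ^ 2) (2 * p.2) p.2 := by
        simpa using (hasDerivAt_pow 2 p.2).const_add (p.1 ^ 2)
      exact hc.div hd hpne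
    have ey : dY (dY (fun p => v p - L p)) p
        = dY (dY v) p - (2 * (p.1 ^ 2 + p.2 ^ 2) - 2 * p.2 * (2 * p.2)) / (p.1 ^ 2 + p.2 ^ 2) ^ 2 := by
      show deriv (deriv (fun t' => v (p.1, t') - L (p.1, t'))) p.2 = _
      rw [hevy.deriv_eq]
      exact (hdYvslice.sub hqy).deriv
    rw [ex, ey]
    have hsum := hlap p
    have hL2 : (2 * (p.1 ^ 2 + p.2 ^ 2) - 2 * p.1 * (2 * p.1)) / (p.1 ^ 2 + p.2 ^ 2) ^ 2
        + (2 * (p.1 ^ 2 + p.2 ^ 2) - 2 * p.2 * (2 * p.2)) / (p.1 ^ 2 + p.2 ^ 2) ^ 2 = 0 := by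
      field_simp
      ring
    linarith
  -- apply the maximum principle in both directions
  have hle : ∀ p ∈ Ω, v p - L p ≤ 0 := by
    apply max_principle_le hbd hop hUo hclU hu (fun p hp => hΔu p (hclU (subset_closure hp)))
    intro p hp
    rw [hbdry p hp]
    simp [hLdef]
  have hge : ∀ p ∈ Ω, -(v p - L p) ≤ 0 := by
    apply max_principle_le hbd hop hUo hclU (fun p hp => (hu p hp).neg)
    · intro p hp
      have h1 := hΔu p (hclU (subset_closure hp))
      rw [show (fun p => -(v p - L p)) = fun p => -((fun q => v q - L q) p) from rfl]
      rw [dX_neg, dY_neg, dX_neg, dY_neg]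
      simp only
      linarith
    · intro p hp
      rw [hbdry p hp]
      simp [hLdef]
  have hvL : ∀ p ∈ Ω, v p = L p := by
    intro p hp
    have := hle p hp
    have := hge p hp
    linarith
  -- identity theorem
  obtain ⟨p0, hp0⟩ := hne
  have hva : AnalyticOnNhd ℝ v U := fun p _ => analyticAt_of_harmonic_dXdY hv hlap p
  have hLaU : AnalyticOnNhd ℝ L U := hLa
  have hUconn : IsPreconnected U := by
    have hrank : 1 < Module.rank ℝ (ℝ × ℝ) := by
      rw [rank_prod', Module.rank_self]
      norm_num
    exact (isConnected_compl_singleton_of_one_lt_rank hrank _).isPreconnected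
  have hev : v =ᶠ[𝓝 p0] L := by
    filter_upwards [hop.mem_nhds hp0] with x hx using hvL x hx
  have hEq : EqOn v L U :=
    hva.eqOn_of_preconnected_of_eventuallyEq hLaU hUconn (hclU (subset_closure hp0)) hev
  -- contradiction at the origin
  have hc : ContinuousAt v ((0 : ℝ), (0 : ℝ)) := hv.continuous.continuousAt
  obtain ⟨δ, hδpos, hδ⟩ := Metric.continuousAt_iff.1 hc 1 one_pos
  set M := |v ((0 : ℝ), (0 : ℝ))| with hM
  have hMnn : 0 ≤ M := abs_nonneg _
  set t := min (δ / 2) (Real.exp (-(M + 2))) with ht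
  have htpos : 0 < t := lt_min (by linarith) (Real.exp_pos _)
  have htU : ((t, (0 : ℝ)) : ℝ × ℝ) ∈ U := by
    intro h
    rw [mem_singleton_iff, Prod.mk.injEq] at h
    exact htpos.ne' h.1
  have hdist : dist ((t, (0 : ℝ)) : ℝ × ℝ) ((0 : ℝ), (0 : ℝ)) < δ := by
    rw [Prod.dist_eq]
    simp only [Real.dist_eq, sub_zero]
    rw [abs_of_pos htpos]
    have h1 : t ≤ δ / 2 := min_le_left _ _
    simp only [abs_zero]
    rw [max_eq_left htpos.le]
    linarith
  have hclose := hδ hdist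
  rw [Real.dist_eq] at hclose
  have hvt : v (t, (0 : ℝ)) = Real.log (t ^ 2) := by
    have := hEq htU
    simpa [hLdef] using this
  have hlogt : Real.log t ≤ -(M + 2) := by
    have h1 : t ≤ Real.exp (-(M + 2)) := min_le_right _ _
    calc Real.log t ≤ Real.log (Real.exp (-(M + 2))) := Real.log_le_log htpos h1
    _ = -(M + 2) := Real.log_exp _
  have hlogt2 : Real.log (t ^ 2) = 2 * Real.log t := by
    rw [Real.log_pow]
    norm_num
  have habs := abs_le.1 hclose.le
  have h2 : v ((0 : ℝ), (0 : ℝ)) ≤ M := le_abs_self _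
  have h3 : -M ≤ v ((0 : ℝ), (0 : ℝ)) := neg_abs_le _
  rw [hvt, hlogt2] at habs
  linarith [habs.1]
end
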